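/- arXiv:math/0506161 — 11 statements merged into one kernel-verified Lean document; each statement's English description precedes it below -/
import Mathlib

section
/- Let A be a commutative ring, F a free A-module of finite rank with a distinguished element e that is part of a basis, and R a commutative A-algebra. Then the map φ ↦ ev_e ∘ φ is a bijection from the set of A-algebra homomorphisms φ : R → End_A(F) such that the map r ↦ φ(r)(e) is surjective, onto the set of surjective A-linear maps u : R → F such that u(1_R) = e and the kernel of u is an ideal of R (i.e. if u(r) = 0 then u(r·r') = 0 for all r' ∈ R). -/
/-- Let `A` be a commutative ring, `F` a free `A`-module of finite rank
with a distinguished element `e` that is part of a basis, and `R` a commutative `A`-algebra.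
Then `φ ↦ ev_e ∘ φ` is a bijection from the set of `A`-algebra homomorphisms
`φ : R → End_A F` such that `r ↦ φ r e` is surjective, onto the set of surjective
`A`-linear maps `u : R → F` with `u 1 = e` whose kernel is an ideal of `R`. -/
theorem stmt0 {A F R : Type*} [CommRing A] [AddCommGroup F] [Module A F]
    [CommRing R] [Algebra A R]
    {ι : Type*} [Fintype ι] (b : Module.Basis ι A F) (i₀ : ι) (e : F) (he : e = b i₀) :
    Set.BijOn
      (fun φ : R →ₐ[A] Module.End A F => (LinearMap.applyₗ e) ∘ₗ φ.toLinearMap)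
      {φ : R →ₐ[A] Module.End A F | Function.Surjective fun r => φ r e}
      {u : R →ₗ[A] F | Function.Surjective u ∧ u 1 = e ∧
        ∀ r r' : R, u r = 0 → u (r * r') = 0} := by
  refine ⟨?_, ?_, ?_⟩
  · rintro φ hφ
    refine ⟨hφ, by simp, ?_⟩
    intro r r' h
    have h' : φ r e = 0 := h
    show φ (r * r') e = 0
    rw [mul_comm, map_mul, Module.End.mul_apply, h', map_zero]
  · intro φ hφ ψ hψ h
    have h' : ∀ r : R, φ r e = ψ r e := fun r => LinearMap.congr_fun h r
    ext r x
    obtain ⟨s, hs⟩ := hφ x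
    replace hs : φ s e = x := hs
    have hs' : ψ s e = x := by rw [← h', hs]
    calc φ r x = φ (r * s) e := by rw [map_mul, Module.End.mul_apply, hs]
    _ = ψ (r * s) e := h' _
    _ = ψ r x := by rw [map_mul, Module.End.mul_apply, hs']
  · rintro u ⟨hsurj, h1, hker⟩
    -- section of u
    set s : F →ₗ[A] R := b.constr A (fun i => Classical.choose (hsurj (b i))) with hs_def
    have hus : ∀ x, u (s x) = x := by
      have : u ∘ₗ s = LinearMap.id := by
        apply b.ext
        intro i
        simp only [LinearMap.comp_apply, hs_def, Module.Basis.constr_basis, LinearMap.id_apply]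
        exact Classical.choose_spec (hsurj (b i))
      intro x
      exact congrArg (fun f => f x) this
    have key : ∀ (r t t' : R), u t = u t' → u (r * t) = u (r * t') := by
      intro r t t' h
      have h0 : u (t - t') = 0 := by rw [map_sub, h, sub_self]
      have := hker _ r h0
      rw [sub_mul] at this
      have : u (t * r) = u (t' * r) := by rw [← sub_eq_zero, ← map_sub]; exact this
      rwa [mul_comm t r, mul_comm t' r] at this
    have key2 : ∀ (r t : R), u (r * s (u t)) = u (r * t) := fun r t => key r _ t (hus (u t))
    set φ : R →ₐ[A] Module.End A F :=
      { toFun := fun r => u ∘ₗ (Algebra.lsmul A A R r) ∘ₗ s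
        map_one' := by
          ext x
          simp [hus]
        map_mul' := by
          intro r r'
          ext x
          simp only [LinearMap.coe_comp, Function.comp_apply, Algebra.lsmul_coe,
            Module.End.mul_apply, smul_eq_mul]
          rw [key2, ← mul_assoc]
        map_zero' := by ext x; simp
        map_add' := by
          intro r r'
          ext x
          simp [add_mul]
        commutes' := by
          intro a
          ext x
          simp only [LinearMap.coe_comp, Function.comp_apply, Algebra.lsmul_coe, smul_eq_mul,
            Module.algebraMap_end_apply]
          rw [← Algebra.smul_def, map_smul, hus] } with hφ_def
    have hse : ∀ r : R, u (r * s e) = u r := by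
      intro r
      have : u (s e) = u 1 := by rw [hus, h1]
      rw [key r _ 1 this, mul_one]
    have happ : ∀ r : R, φ r e = u r := by
      intro r
      simp only [hφ_def, AlgHom.coe_mk, RingHom.coe_mk, MonoidHom.coe_mk, OneHom.coe_mk,
        LinearMap.coe_comp, Function.comp_apply, Algebra.lsmul_coe, smul_eq_mul]
      exact hse r
    refine ⟨φ, ?_, ?_⟩
    · intro x
      obtain ⟨r, hr⟩ := hsurj x
      exact ⟨r, by show φ r e = x; rw [happ, hr]⟩
    · ext r
      exact happ r
end

section
/- Let A be a commutative ring, F a free A-module of finite rank with a distinguished element e that is part of a basis, R a commutative A-algebra, and φ : R → End_A(F) an A-algebra homomorphism such that the map r ↦ φ(r)(e) is surjective. Then an endomorphism v ∈ End_A(F) commutes with φ(r) for every r ∈ R if and only if v lies in the image of φ; that is, the centralizer of the image of φ in End_A(F) equals the image of φ. -/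
/-- Let `A` be a commutative ring, `F` a free `A`-module of finite rank
with a distinguished element `e` that is part of a basis, `R` a commutative `A`-algebra,
and `φ : R → End_A F` an `A`-algebra homomorphism such that `r ↦ φ r e` is surjective.
Then an endomorphism `v` commutes with every `φ r` if and only if `v` is in the image of
`φ`: the centralizer of the image of `φ` equals the image of `φ`. -/
theorem stmt1 {A F R : Type*} [CommRing A] [AddCommGroup F] [Module A F]
    [CommRing R] [Algebra A R]
    {ι : Type*} [Fintype ι] (b : Module.Basis ι A F) (i₀ : ι) (e : F) (he : e = b i₀)
    (φ : R →ₐ[A] Module.End A F)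
    (hsurj : Function.Surjective fun r => φ r e) :
    Set.centralizer (Set.range ⇑φ) = Set.range ⇑φ := by
  ext v
  constructor
  · intro hv
    obtain ⟨r, hr⟩ := hsurj (v e)
    refine ⟨r, ?_⟩
    apply LinearMap.ext
    intro x
    obtain ⟨s, hs⟩ := hsurj x
    simp only [] at hr hs
    have hcomm : φ s * v = v * φ s := hv (φ s) ⟨s, rfl⟩
    calc φ r x = φ r (φ s e) := by rw [hs]
      _ = φ s (φ r e) := by
          rw [← Module.End.mul_apply, ← Module.End.mul_apply, ← map_mul, ← map_mul, mul_comm]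
      _ = φ s (v e) := by rw [hr]
      _ = v (φ s e) := by
          rw [← Module.End.mul_apply, ← Module.End.mul_apply, hcomm]
      _ = v x := by rw [hs]
  · rintro ⟨r, rfl⟩ w ⟨s, rfl⟩
    rw [← map_mul, ← map_mul, mul_comm]
end

section
/- Let A be a commutative ring, F a free A-module of finite rank with a distinguished element e that is part of a basis, R a commutative A-algebra, and β : F → R an A-linear map with β(e) = 1_R. Let R[Z] be the polynomial ring over R and ι : R → R[Z] the inclusion. Then the map ψ ↦ (ψ ∘ ι, (ψ(Z))(e)) is a bijection from the set of A-algebra homomorphisms ψ : R[Z] → End_A(F) such that the composite x ↦ ψ(ι(β(x)))(e) is the identity of F, onto the set of pairs (φ, z) where φ : R → End_A(F) is an A-algebra homomorphism with x ↦ φ(β(x))(e) equal to the identity of F and z ∈ F. -/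
open Polynomial

/-- Let `A` be a commutative ring, `F` a free `A`-module of finite rank
with a distinguished element `e` part of a basis, `R` a commutative `A`-algebra and
`β : F → R` an `A`-linear map with `β e = 1`.  Then `ψ ↦ (ψ ∘ C, ψ Z e)` is a bijection
from the set of `A`-algebra homomorphisms `ψ : R[Z] → End_A F` such that
`x ↦ ψ (C (β x)) e` is the identity of `F`, onto the set of pairs `(φ, z)` where
`φ : R → End_A F` is an `A`-algebra homomorphism with `x ↦ φ (β x) e` the identity of `F`
and `z ∈ F`. -/
theorem stmt2 {A F R : Type*} [CommRing A] [AddCommGroup F] [Module A F]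
    [CommRing R] [Algebra A R]
    {ι : Type*} [Fintype ι] (b : Module.Basis ι A F) (i₀ : ι) (e : F) (he : e = b i₀)
    (β : F →ₗ[A] R) (hβ : β e = 1) :
    Set.BijOn
      (fun ψ : Polynomial R →ₐ[A] Module.End A F =>
        (ψ.comp (Polynomial.CAlgHom (R := A) (A := R)), ψ Polynomial.X e))
      {ψ : Polynomial R →ₐ[A] Module.End A F | ∀ x : F, ψ (Polynomial.C (β x)) e = x}
      {p : (R →ₐ[A] Module.End A F) × F | ∀ x : F, p.1 (β x) e = x} := by
  have key : ∀ ψ : Polynomial R →ₐ[A] Module.End A F,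
      (∀ x : F, ψ (Polynomial.C (β x)) e = x) →
      ψ Polynomial.X = ψ (Polynomial.C (β (ψ Polynomial.X e))) := by
    intro ψ hψ
    ext x
    conv_lhs => rw [← hψ x]
    rw [← Module.End.mul_apply, ← map_mul, Polynomial.X_mul_C, map_mul,
      Module.End.mul_apply]
    conv_rhs => rw [← hψ x, ← Module.End.mul_apply, ← map_mul, ← Polynomial.C_mul,
      mul_comm, Polynomial.C_mul, map_mul, Module.End.mul_apply, hψ]
  refine ⟨fun ψ hψ x => hψ x, ?_, ?_⟩
  · intro ψ₁ h₁ ψ₂ h₂ heq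
    have hc : ψ₁.comp Polynomial.CAlgHom = ψ₂.comp Polynomial.CAlgHom :=
      congrArg Prod.fst heq
    have hx : ψ₁ Polynomial.X e = ψ₂ Polynomial.X e := congrArg Prod.snd heq
    refine Polynomial.algHom_ext' hc ?_
    rw [key ψ₁ h₁, key ψ₂ h₂, hx]
    exact AlgHom.congr_fun hc _
  · rintro ⟨φ, z⟩ hp
    have hcomm : ∀ r : R, Commute (φ r) (φ (β z)) := fun r =>
      (map_mul φ r (β z)).symm.trans ((congrArg φ (mul_comm _ _)).trans (map_mul φ _ _))
    refine ⟨Polynomial.eval₂AlgHom φ (φ (β z)) hcomm, ?_, ?_⟩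
    · intro x
      simpa using hp x
    · simp only [Set.mem_setOf_eq] at hp
      ext : 1
      · ext r
        simp
      · simpa using hp z
end

section
/- Let A be a commutative ring, N an A-module, P a free A-module of finite rank, and u : N → P an A-linear map. Let I_Z(u) be the ideal of A generated by the elements w(u(x)) for x ∈ N and w ∈ Pˇ = Hom_A(P, A). Then for every commutative A-algebra B, the base-changed map id_B ⊗ u : B ⊗_A N → B ⊗_A P is zero if and only if I_Z(u) is contained in the kernel of the structure map A → B (equivalently, A → B factors through A/I_Z(u)). -/
/-!
The base change `id_B ⊗ u` vanishes iff `1 ⊗ u x = 0` for every `x`. For `P` free with basis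
`b`, `B ⊗ P` is free with basis `1 ⊗ b` and the coordinates of `1 ⊗ p` are the images in `B` of
those of `p`; since the coordinate forms are among the elements of `Pˇ`, and every `w ∈ Pˇ`
base-changes to `B`, the condition is that every `w (u x)` maps to `0` in `B`.
-/

open TensorProduct

section BaseChange

variable {A B : Type*} [CommRing A] [CommRing B] [Algebra A B]

theorem LinearMap.baseChange_eq_zero_iff {M N : Type*} [AddCommGroup M] [Module A M]
    [AddCommGroup N] [Module A N] (f : M →ₗ[A] N) :
    f.baseChange B = 0 ↔ ∀ x, (1 : B) ⊗ₜ[A] f x = 0 := by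
  constructor
  · intro h x
    simpa using LinearMap.congr_fun h ((1 : B) ⊗ₜ[A] x)
  · intro h
    ext x
    simpa using h x

variable {P : Type*} [AddCommGroup P] [Module A P]

theorem Module.Dual.algebraMap_apply_eq_zero_of_one_tmul_eq_zero (w : Module.Dual A P) {p : P}
    (hp : (1 : B) ⊗ₜ[A] p = 0) : algebraMap A B (w p) = 0 := by
  have h := congrArg (TensorProduct.rid A B ∘ LinearMap.baseChange B w) hp
  simpa [Algebra.smul_def] using h

theorem Module.Basis.one_tmul_eq_zero_iff {ι : Type*} (b : Module.Basis ι A P) (p : P) :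
    (1 : B) ⊗ₜ[A] p = 0 ↔ ∀ i, algebraMap A B (b.repr p i) = 0 := by
  rw [← (Algebra.TensorProduct.basis B b).repr.map_eq_zero_iff,
    Algebra.TensorProduct.basis_repr_tmul, one_smul, Finsupp.ext_iff]
  simp

theorem one_tmul_eq_zero_iff_forall_dual [Module.Free A P] (p : P) :
    (1 : B) ⊗ₜ[A] p = 0 ↔ ∀ w : Module.Dual A P, algebraMap A B (w p) = 0 := by
  let b := Module.Free.chooseBasis A P
  refine ⟨fun hp w => w.algebraMap_apply_eq_zero_of_one_tmul_eq_zero hp, fun h => ?_⟩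
  exact (b.one_tmul_eq_zero_iff p).mpr fun i => h (b.coord i)

end BaseChange

theorem stmt5_general {A N P : Type*} [CommRing A] [AddCommGroup N] [Module A N]
    [AddCommGroup P] [Module A P] [Module.Free A P]
    (u : N →ₗ[A] P) (B : Type*) [CommRing B] [Algebra A B] :
    LinearMap.baseChange B u = 0 ↔
      Ideal.span {a : A | ∃ (x : N) (w : Module.Dual A P), w (u x) = a} ≤
        RingHom.ker (algebraMap A B) := by
  simp_rw [u.baseChange_eq_zero_iff, one_tmul_eq_zero_iff_forall_dual, Ideal.span_le]
  constructor
  · rintro h _ ⟨x, w, rfl⟩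
    exact h x w
  · exact fun h x w => h ⟨x, w, rfl⟩

/-- Let `A` be a commutative ring, `N` an `A`-module, `P` a free
`A`-module of finite rank and `u : N → P` an `A`-linear map.  Let `I_Z(u)` be the ideal
of `A` generated by the values `w (u x)` for `x ∈ N` and `w ∈ Pˇ`.  Then for every
commutative `A`-algebra `B`, the base change `id_B ⊗ u : B ⊗ N → B ⊗ P` is zero if and
only if `I_Z(u)` is contained in the kernel of the structure map `A → B`. -/
theorem stmt5 {A N P : Type*} [CommRing A] [AddCommGroup N] [Module A N]
    [AddCommGroup P] [Module A P] [Module.Free A P] [Module.Finite A P]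
    (u : N →ₗ[A] P) (B : Type*) [CommRing B] [Algebra A B] :
    LinearMap.baseChange B u = 0 ↔
      Ideal.span {a : A | ∃ (x : N) (w : Module.Dual A P), w (u x) = a} ≤
        RingHom.ker (algebraMap A B) :=
  stmt5_general u B
end

section
/- Let A be a commutative ring, n ≥ 1, S a set, A[Y] the polynomial ring over A in variables Y_s (s ∈ S), and A[U] the polynomial ring over A in variables U^s_{ij} (s ∈ S, 1 ≤ i,j ≤ n). Let I₁ ⊆ A[U] be the ideal generated by the entries of the commutators (U^s)(U^t) − (U^t)(U^s), let I ⊆ A[Y] be an ideal, and let I₂ ⊆ A[U] be the ideal generated by the entries of the matrices f((U^s)), obtained by substituting the matrix (U^s) for Y_s in f, for all f ∈ I. Then for every commutative A-algebra B, there is a bijection between the set of A-algebra homomorphisms A[U]/(I₁ + I₂) → B and the set of A-algebra homomorphisms A[Y]/I → M_n(B), under which a homomorphism ψ : A[U]/(I₁ + I₂) → B corresponds to the homomorphism sending the class of Y_s to the matrix (ψ(U^s_{ij}))_{i,j}. -/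
/-- The generic matrix `(U^s)` whose `(i,j)` entry is the variable `U^s_{ij}` of the
polynomial ring `A[U]`. -/
noncomputable def genMatrix (A : Type*) [CommRing A] (n : ℕ) (S : Type*) (s : S) :
    Matrix (Fin n) (Fin n) (MvPolynomial (S × Fin n × Fin n) A) :=
  Matrix.of fun i j => MvPolynomial.X (s, i, j)

/-- The ideal `I₁` of `A[U]` generated by the entries of the commutators
`(U^s)(U^t) − (U^t)(U^s)`. -/
noncomputable def commIdeal (A : Type*) [CommRing A] (n : ℕ) (S : Type*) :
    Ideal (MvPolynomial (S × Fin n × Fin n) A) :=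
  Ideal.span {p | ∃ (s t : S) (i j : Fin n),
    p = (genMatrix A n S s * genMatrix A n S t
          - genMatrix A n S t * genMatrix A n S s) i j}

/-- Substitution of a family `U : S → R` of elements of an `A`-algebra `R` for the
variables of a multivariate polynomial `f ∈ A[Y_s : s ∈ S]`; for each monomial the
product is taken in some fixed order (for pairwise commuting values, or modulo the
commutator ideal, this is the usual evaluation `f(U)`). -/
noncomputable def matSubst {A R : Type*} [CommRing A] [Ring R] [Algebra A R]
    {S : Type*} (U : S → R) (f : MvPolynomial S A) : R :=
  ∑ m ∈ f.support, algebraMap A R (f.coeff m) *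
    (m.support.toList.map fun s => U s ^ m s).prod

/-- The ideal `I₂` of `A[U]` generated by the entries of the matrices `f((U^s))` for
`f ∈ I`. -/
noncomputable def relIdeal (A : Type*) [CommRing A] (n : ℕ) (S : Type*)
    (I : Ideal (MvPolynomial S A)) : Ideal (MvPolynomial (S × Fin n × Fin n) A) :=
  Ideal.span {p | ∃ f ∈ I, ∃ i j : Fin n, p = matSubst (genMatrix A n S) f i j}

open MvPolynomial

theorem matSubst_map {A R R' : Type*} [CommRing A] [Ring R] [Ring R'] [Algebra A R]
    [Algebra A R'] {S : Type*} (g : R →ₐ[A] R') (U : S → R) (f : MvPolynomial S A) :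
    g (matSubst U f) = matSubst (fun s => g (U s)) f := by
  unfold matSubst
  rw [map_sum]
  refine Finset.sum_congr rfl fun m _ => ?_
  rw [map_mul, AlgHom.commutes, map_list_prod, List.map_map]
  congr 2
  ext s
  simp [map_pow]

theorem matSubst_algHom {A R : Type*} [CommRing A] [Ring R] [Algebra A R] {S : Type*}
    (g : MvPolynomial S A →ₐ[A] R) (f : MvPolynomial S A) :
    matSubst (fun s => g (X s)) f = g f := by
  conv_rhs => rw [f.as_sum]
  rw [map_sum]
  unfold matSubst
  refine Finset.sum_congr rfl fun m _ => ?_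
  rw [monomial_eq, map_mul, algHom_C, Finsupp.prod, ← Finset.prod_map_toList,
    map_list_prod, List.map_map]
  congr 2
  ext s
  simp [map_pow]

namespace Stmt7

variable {A : Type*} [CommRing A] {n : ℕ} {S : Type*}
  {I : Ideal (MvPolynomial S A)} {B : Type*} [CommRing B] [Algebra A B]

/-- The matrix `(ψ U^s_{ij})_{ij}`. -/
noncomputable def fwdV
    (ψ : (MvPolynomial (S × Fin n × Fin n) A ⧸
      (commIdeal A n S + relIdeal A n S I)) →ₐ[A] B) (s : S) :
    Matrix (Fin n) (Fin n) B :=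
  Matrix.of fun i j => ψ (Ideal.Quotient.mk _ (X (s, i, j)))

theorem fwdV_eq
    (ψ : (MvPolynomial (S × Fin n × Fin n) A ⧸
      (commIdeal A n S + relIdeal A n S I)) →ₐ[A] B) (s : S) :
    fwdV ψ s = (AlgHom.mapMatrix
      (ψ.comp (Ideal.Quotient.mkₐ A (commIdeal A n S + relIdeal A n S I))))
        (genMatrix A n S s) := by
  ext i j
  simp [fwdV, genMatrix, AlgHom.mapMatrix_apply, Matrix.map_apply]

theorem psi0_vanish
    (ψ : (MvPolynomial (S × Fin n × Fin n) A ⧸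
      (commIdeal A n S + relIdeal A n S I)) →ₐ[A] B)
    {x : MvPolynomial (S × Fin n × Fin n) A}
    (hx : x ∈ commIdeal A n S + relIdeal A n S I) :
    (ψ.comp (Ideal.Quotient.mkₐ A (commIdeal A n S + relIdeal A n S I))) x = 0 := by
  have : Ideal.Quotient.mk (commIdeal A n S + relIdeal A n S I) x = 0 :=
    (Ideal.Quotient.eq_zero_iff_mem).mpr hx
  rw [AlgHom.comp_apply, Ideal.Quotient.mkₐ_eq_mk, this, map_zero]

theorem fwdV_comm
    (ψ : (MvPolynomial (S × Fin n × Fin n) A ⧸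
      (commIdeal A n S + relIdeal A n S I)) →ₐ[A] B) (s t : S) :
    fwdV ψ s * fwdV ψ t = fwdV ψ t * fwdV ψ s := by
  rw [← sub_eq_zero, fwdV_eq, fwdV_eq, ← map_mul, ← map_mul, ← map_sub]
  ext i j
  rw [AlgHom.mapMatrix_apply, Matrix.map_apply]
  apply psi0_vanish
  refine Submodule.mem_sup_left (Ideal.subset_span ?_)
  exact ⟨s, t, i, j, rfl⟩

theorem matSubst_fwdV
    (ψ : (MvPolynomial (S × Fin n × Fin n) A ⧸
      (commIdeal A n S + relIdeal A n S I)) →ₐ[A] B)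
    (f : MvPolynomial S A) (hf : f ∈ I) :
    matSubst (fwdV ψ) f = 0 := by
  have h1 : matSubst (fwdV ψ) f = (AlgHom.mapMatrix
      (ψ.comp (Ideal.Quotient.mkₐ A (commIdeal A n S + relIdeal A n S I))))
        (matSubst (genMatrix A n S) f) := by
    rw [matSubst_map]
    exact congrArg (matSubst · f) (funext fun s => (fwdV_eq ψ s).symm)
  rw [h1]
  ext i j
  rw [AlgHom.mapMatrix_apply, Matrix.map_apply]
  have : (0 : Matrix (Fin n) (Fin n) B) i j = 0 := rfl
  rw [this]
  apply psi0_vanish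
  refine Submodule.mem_sup_right (Ideal.subset_span ?_)
  exact ⟨f, hf, i, j, rfl⟩

/-- Forward map: from `ψ` to the hom `A[Y]/I → Mₙ(B)`. -/
noncomputable def fwd
    (ψ : (MvPolynomial (S × Fin n × Fin n) A ⧸
      (commIdeal A n S + relIdeal A n S I)) →ₐ[A] B) :
    (MvPolynomial S A ⧸ I) →ₐ[A] Matrix (Fin n) (Fin n) B :=
  letI : CommRing (Algebra.adjoin A (Set.range (fwdV ψ))) :=
    Algebra.adjoinCommRingOfComm A (by
      rintro a ⟨s, rfl⟩ b ⟨t, rfl⟩; exact fwdV_comm ψ s t)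
  Ideal.Quotient.liftₐ I
    ((Algebra.adjoin A (Set.range (fwdV ψ))).val.comp
      (aeval fun s => (⟨fwdV ψ s, Algebra.subset_adjoin ⟨s, rfl⟩⟩ :
        Algebra.adjoin A (Set.range (fwdV ψ)))))
    (by
      intro f hf
      set g := (Algebra.adjoin A (Set.range (fwdV ψ))).val.comp
        (aeval fun s => (⟨fwdV ψ s, Algebra.subset_adjoin ⟨s, rfl⟩⟩ :
          Algebra.adjoin A (Set.range (fwdV ψ)))) with hg
      have hX : ∀ s, g (X s) = fwdV ψ s := by intro s; simp [hg]
      have := matSubst_algHom g f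
      rw [show (fun s => g (X s)) = fwdV ψ from funext hX] at this
      rw [← this, matSubst_fwdV ψ f hf])

theorem fwd_mk_X
    (ψ : (MvPolynomial (S × Fin n × Fin n) A ⧸
      (commIdeal A n S + relIdeal A n S I)) →ₐ[A] B) (s : S) :
    fwd ψ (Ideal.Quotient.mk I (X s)) = fwdV ψ s := by
  simp [fwd, Ideal.Quotient.liftₐ_apply, Ideal.Quotient.lift_mk]
  letI : CommRing (Algebra.adjoin A (Set.range (fwdV ψ))) :=
    Algebra.adjoinCommRingOfComm A (by
      rintro a ⟨s, rfl⟩ b ⟨t, rfl⟩; exact fwdV_comm ψ s t)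
  exact congrArg Subtype.val (aeval_X _ s)

/-- Backward map. -/
noncomputable def bwd
    (χ : (MvPolynomial S A ⧸ I) →ₐ[A] Matrix (Fin n) (Fin n) B) :
    (MvPolynomial (S × Fin n × Fin n) A ⧸
      (commIdeal A n S + relIdeal A n S I)) →ₐ[A] B :=
  Ideal.Quotient.liftₐ _
    (aeval fun p : S × Fin n × Fin n => χ (Ideal.Quotient.mk I (X p.1)) p.2.1 p.2.2)
    (by
      set φ : MvPolynomial (S × Fin n × Fin n) A →ₐ[A] B :=
        aeval fun p : S × Fin n × Fin n => χ (Ideal.Quotient.mk I (X p.1)) p.2.1 p.2.2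
        with hφ
      have hgen : ∀ s : S, (AlgHom.mapMatrix φ) (genMatrix A n S s)
          = χ (Ideal.Quotient.mk I (X s)) := by
        intro s; ext i j
        simp [hφ, genMatrix, AlgHom.mapMatrix_apply, Matrix.map_apply]
      intro x hx
      rcases Submodule.mem_sup.mp hx with ⟨y, hy, z, hz, rfl⟩
      have hker : ∀ w ∈ (commIdeal A n S + relIdeal A n S I), φ w = 0 → True := fun _ _ _ => trivial
      have h1 : commIdeal A n S ≤ RingHom.ker (φ : MvPolynomial (S × Fin n × Fin n) A →+* B) := by
        rw [commIdeal, Ideal.span_le]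
        rintro p ⟨s, t, i, j, rfl⟩
        rw [SetLike.mem_coe, RingHom.mem_ker]
        show φ _ = 0
        have : φ ((genMatrix A n S s * genMatrix A n S t
            - genMatrix A n S t * genMatrix A n S s) i j)
            = ((AlgHom.mapMatrix φ) (genMatrix A n S s * genMatrix A n S t
              - genMatrix A n S t * genMatrix A n S s)) i j := by
          rw [AlgHom.mapMatrix_apply, Matrix.map_apply]
        rw [this, map_sub, map_mul, map_mul, hgen, hgen]
        have hc : χ (Ideal.Quotient.mk I (X s)) * χ (Ideal.Quotient.mk I (X t))
            = χ (Ideal.Quotient.mk I (X t)) * χ (Ideal.Quotient.mk I (X s)) :=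
          ((Commute.all (Ideal.Quotient.mk I (X s)) (Ideal.Quotient.mk I (X t))).map χ).eq
        rw [hc, sub_self]
        rfl
      have h2 : relIdeal A n S I ≤ RingHom.ker (φ : MvPolynomial (S × Fin n × Fin n) A →+* B) := by
        rw [relIdeal, Ideal.span_le]
        rintro p ⟨f, hf, i, j, rfl⟩
        rw [SetLike.mem_coe, RingHom.mem_ker]
        show φ _ = 0
        have : φ (matSubst (genMatrix A n S) f i j)
            = ((AlgHom.mapMatrix φ) (matSubst (genMatrix A n S) f)) i j := by
          rw [AlgHom.mapMatrix_apply, Matrix.map_apply]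
        rw [this, matSubst_map]
        have hX2 : (fun s => (AlgHom.mapMatrix φ) (genMatrix A n S s))
            = fun s : S => (χ.comp (Ideal.Quotient.mkₐ A I)) (X s) := by
          funext s; rw [hgen]; simp [Ideal.Quotient.mkₐ_eq_mk]
        rw [hX2, matSubst_algHom]
        have : (Ideal.Quotient.mkₐ A I) f = 0 := by
          rw [Ideal.Quotient.mkₐ_eq_mk]
          exact Ideal.Quotient.eq_zero_iff_mem.mpr hf
        rw [AlgHom.comp_apply, this, map_zero]
        rfl
      rw [map_add]
      have hy' := h1 hy
      have hz' := h2 hz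
      rw [RingHom.mem_ker] at hy' hz'
      show (φ : MvPolynomial (S × Fin n × Fin n) A →+* B) y
        + (φ : MvPolynomial (S × Fin n × Fin n) A →+* B) z = 0
      rw [hy', hz', add_zero])

theorem bwd_mk_X
    (χ : (MvPolynomial S A ⧸ I) →ₐ[A] Matrix (Fin n) (Fin n) B)
    (p : S × Fin n × Fin n) :
    bwd χ (Ideal.Quotient.mk _ (X p)) = χ (Ideal.Quotient.mk I (X p.1)) p.2.1 p.2.2 := by
  simp [bwd, Ideal.Quotient.liftₐ_apply, Ideal.Quotient.lift_mk]
  exact aeval_X _ _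



theorem bwd_fwd
    (ψ : (MvPolynomial (S × Fin n × Fin n) A ⧸
      (commIdeal A n S + relIdeal A n S I)) →ₐ[A] B) :
    bwd (fwd ψ) = ψ := by
  apply Ideal.Quotient.algHom_ext
  apply MvPolynomial.algHom_ext
  intro p
  rw [AlgHom.comp_apply, AlgHom.comp_apply, Ideal.Quotient.mkₐ_eq_mk, bwd_mk_X, fwd_mk_X]
  rfl

theorem fwd_bwd
    (χ : (MvPolynomial S A ⧸ I) →ₐ[A] Matrix (Fin n) (Fin n) B) :
    fwd (bwd χ) = χ := by
  apply Ideal.Quotient.algHom_ext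
  apply MvPolynomial.algHom_ext
  intro s
  rw [AlgHom.comp_apply, AlgHom.comp_apply, Ideal.Quotient.mkₐ_eq_mk, fwd_mk_X]
  ext i j
  show fwdV (bwd χ) s i j = _
  rw [show fwdV (bwd χ) s i j
      = bwd χ (Ideal.Quotient.mk _ (X (s, i, j))) from rfl, bwd_mk_X χ ((s, i, j))]


end Stmt7
/-- For every commutative `A`-algebra `B` there is a bijection between
the `A`-algebra homomorphisms `A[U]/(I₁ + I₂) → B` and the `A`-algebra homomorphisms
`A[Y]/I → M_n(B)`, under which `ψ` corresponds to the homomorphism sending the class of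
`Y_s` to the matrix `(ψ U^s_{ij})_{ij}`. -/
theorem stmt7 (A : Type*) [CommRing A] (n : ℕ) (hn : 1 ≤ n) (S : Type*)
    (I : Ideal (MvPolynomial S A)) (B : Type*) [CommRing B] [Algebra A B] :
    ∃ e : ((MvPolynomial (S × Fin n × Fin n) A ⧸
            (commIdeal A n S + relIdeal A n S I)) →ₐ[A] B) ≃
          ((MvPolynomial S A ⧸ I) →ₐ[A] Matrix (Fin n) (Fin n) B),
      ∀ (ψ : (MvPolynomial (S × Fin n × Fin n) A ⧸
            (commIdeal A n S + relIdeal A n S I)) →ₐ[A] B) (s : S),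
        (e ψ) (Ideal.Quotient.mk I (MvPolynomial.X s)) =
          Matrix.of fun i j : Fin n =>
            ψ (Ideal.Quotient.mk (commIdeal A n S + relIdeal A n S I)
              (MvPolynomial.X (s, i, j))) := by

  refine ⟨⟨Stmt7.fwd, Stmt7.bwd, Stmt7.bwd_fwd, Stmt7.fwd_bwd⟩, ?_⟩
  intro ψ s
  exact Stmt7.fwd_mk_X ψ s
end

section
/- Let A be a commutative ring, R a commutative A-algebra, F a free A-module of rank n with basis T_1, …, T_n and e = T_1, and β : F → R an A-linear map with β(e) = 1_R. For each commutative A-algebra B let Hilb^β(B) be the set of ideals I of B ⊗_A R such that the composite B ⊗_A F → B ⊗_A R → (B ⊗_A R)/I (the first map being id_B ⊗ β, the second the quotient map) is bijective; for an A-algebra homomorphism B → B', an ideal I ∈ Hilb^β(B) is sent to the ideal of B' ⊗_A R generated by the image of I. Then this functor is corepresentable: there exist a commutative A-algebra H and bijections Hom_{A-alg}(H, B) → Hilb^β(B), natural in B. -/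
universe u

open TensorProduct

namespace Stmt9Aux

variable {A R F : Type u} [CommRing A] [CommRing R] [Algebra A R]
  [AddCommGroup F] [Module A F] {n : ℕ}

section B

variable (b : Module.Basis (Fin n) A F) (β : F →ₗ[A] R)
variable (B : Type u) [CommRing B] [Algebra A B]

/-- The defining relations for a "structure-constant" function `v`. -/
def Rel (v : Fin n × R → B) : Prop :=
  (∀ (i : Fin n) (r s : R), v (i, r + s) = v (i, r) + v (i, s)) ∧
  (∀ (i : Fin n) (a : A) (r : R), v (i, a • r) = algebraMap A B a * v (i, r)) ∧
  (∀ i j : Fin n, v (i, β (b j)) = if i = j then 1 else 0) ∧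
  (∀ (i : Fin n) (r s : R), v (i, r * s) = ∑ j, v (j, s) * v (i, r * β (b j)))

variable {b β B} {v : Fin n × R → B}

/-- ψ : B ⊗ R → B ⊗ F determined by v. -/
noncomputable def psi (hv : Rel b β B v) : B ⊗[A] R →ₗ[A] B ⊗[A] F :=
  TensorProduct.lift <| LinearMap.mk₂ A (fun c r => ∑ i, (c * v (i, r)) ⊗ₜ[A] b i)
    (fun c₁ c₂ r => by simp [add_mul, add_tmul, Finset.sum_add_distrib])
    (fun a c r => by simp [smul_mul_assoc, ← smul_tmul', Finset.smul_sum])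
    (fun c r s => by simp [hv.1, mul_add, add_tmul, Finset.sum_add_distrib])
    (fun a c r => by
      simp only [hv.2.1, Finset.smul_sum, ← smul_tmul']
      refine Finset.sum_congr rfl fun i _ => ?_
      rw [smul_tmul', Algebra.smul_def]; ring_nf)

@[simp] lemma psi_tmul (hv : Rel b β B v) (c : B) (r : R) :
    psi hv (c ⊗ₜ[A] r) = ∑ i, (c * v (i, r)) ⊗ₜ[A] b i := rfl

lemma psi_smul (hv : Rel b β B v) (c : B) (x : B ⊗[A] R) :
    psi hv (c • x) = c • psi hv x := by
  induction x with
  | zero => simp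
  | tmul d r => simp [smul_tmul', Finset.smul_sum, mul_assoc, smul_eq_mul]
  | add x y hx hy => simp [smul_add, hx, hy]

lemma psi_baseChange (hv : Rel b β B v) (x : B ⊗[A] F) :
    psi hv (LinearMap.baseChange B β x) = x := by
  induction x with
  | zero => simp
  | add x y hx hy => simp [hx, hy]
  | tmul c y =>
    have key : (psi hv).comp ((TensorProduct.mk A B R c).comp β)
        = TensorProduct.mk A B F c := by
      refine b.ext fun j => ?_
      simp only [LinearMap.comp_apply, TensorProduct.mk_apply, psi_tmul, hv.2.2.1,
        mul_ite, mul_one, mul_zero, TensorProduct.ite_tmul]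
      simp
    simpa using LinearMap.congr_fun key y

lemma psi_one_mul (hv : Rel b β B v) (r : R) (x : B ⊗[A] R) :
    psi hv ((1 ⊗ₜ[A] r) * x)
      = psi hv ((1 ⊗ₜ[A] r) * LinearMap.baseChange B β (psi hv x)) := by
  induction x with
  | zero => simp
  | add x y hx hy => simp [mul_add, hx, hy]
  | tmul c s =>
    have expand : ((1:B) ⊗ₜ[A] r) * (c ⊗ₜ[A] s) = c ⊗ₜ[A] (r * s) := by
      simp [Algebra.TensorProduct.tmul_mul_tmul]
    rw [expand, psi_tmul]
    have lhs1 : ∑ i, (c * v (i, r * s)) ⊗ₜ[A] b i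
        = ∑ j, ∑ i, ((c * v (j, s)) * v (i, r * β (b j))) ⊗ₜ[A] b i := by
      rw [Finset.sum_comm]
      refine Finset.sum_congr rfl fun i _ => ?_
      rw [hv.2.2.2, Finset.mul_sum, TensorProduct.sum_tmul]
      exact Finset.sum_congr rfl fun j _ => by rw [mul_assoc]
    rw [lhs1, psi_tmul, map_sum]
    simp only [LinearMap.baseChange_tmul, Finset.mul_sum,
      Algebra.TensorProduct.tmul_mul_tmul, one_mul, map_sum, psi_tmul]

lemma psi_sub_mem (hv : Rel b β B v) (x : B ⊗[A] R) :
    psi hv (x - LinearMap.baseChange B β (psi hv x)) = 0 := by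
  rw [map_sub, psi_baseChange, sub_self]

lemma psi_mul (hv : Rel b β B v) (y x : B ⊗[A] R) (hx : psi hv x = 0) :
    psi hv (y * x) = 0 := by
  induction y with
  | zero => simp
  | add y z hy hz => simp [add_mul, hy, hz]
  | tmul c r =>
    have h1 : (c ⊗ₜ[A] r) * x = c • ((1 ⊗ₜ[A] r) * x) := by
      rw [← smul_mul_assoc]
      congr 1
      rw [smul_tmul', smul_eq_mul, mul_one]
    rw [h1, psi_smul, psi_one_mul hv, hx, map_zero, mul_zero, map_zero, smul_zero]

/-- The ideal `ker ψ_v`. -/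
noncomputable def relIdeal (hv : Rel b β B v) : Ideal (B ⊗[A] R) where
  carrier := {x | psi hv x = 0}
  add_mem' := fun hx hy => by simp_all [Set.mem_setOf_eq]
  zero_mem' := map_zero _
  smul_mem' := fun c x hx => by
    simpa [smul_eq_mul] using psi_mul hv c x hx

lemma mem_relIdeal_iff (hv : Rel b β B v) (x : B ⊗[A] R) :
    x ∈ relIdeal hv ↔ psi hv x = 0 := Iff.rfl

lemma relIdeal_bijective (hv : Rel b β B v) :
    Function.Bijective fun x : B ⊗[A] F =>
      Ideal.Quotient.mk (relIdeal hv) (LinearMap.baseChange B β x) := by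
  constructor
  · intro x y hxy
    have h : LinearMap.baseChange B β x - LinearMap.baseChange B β y ∈ relIdeal hv :=
      Ideal.Quotient.eq.mp hxy
    rw [← map_sub] at h
    have := (mem_relIdeal_iff hv _).mp h
    rw [psi_baseChange] at this
    exact sub_eq_zero.mp this
  · intro q
    obtain ⟨z, rfl⟩ := Ideal.Quotient.mk_surjective q
    refine ⟨psi hv z, ?_⟩
    rw [Ideal.Quotient.eq]
    have := psi_sub_mem hv z
    have h2 : -(z - LinearMap.baseChange B β (psi hv z)) ∈ relIdeal hv := by
      exact neg_mem this
    simpa [neg_sub] using h2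

section Reverse

variable (b β B)
variable (I : Ideal (B ⊗[A] R))
  (hI : Function.Bijective fun x : B ⊗[A] F =>
    Ideal.Quotient.mk I (LinearMap.baseChange B β x))

/-- The linear equivalence `B ⊗ F ≃ (B ⊗ R)/I`. -/
noncomputable def alphaL : (B ⊗[A] F) ≃ₗ[B] (B ⊗[A] R) ⧸ I :=
  LinearEquiv.ofBijective
    ((Ideal.Quotient.mkₐ B I).toLinearMap ∘ₗ LinearMap.baseChange B β) hI

@[simp] lemma alphaL_apply (x : B ⊗[A] F) :
    alphaL β B I hI x = Ideal.Quotient.mk I (LinearMap.baseChange B β x) := rfl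

/-- `ψ_I := α⁻¹ ∘ mk`. -/
noncomputable def psiI : B ⊗[A] R →ₗ[B] B ⊗[A] F :=
  (alphaL β B I hI).symm.toLinearMap ∘ₗ (Ideal.Quotient.mkₐ B I).toLinearMap

@[simp] lemma psiI_apply (x : B ⊗[A] R) :
    psiI β B I hI x = (alphaL β B I hI).symm (Ideal.Quotient.mk I x) := rfl

lemma psiI_baseChange (x : B ⊗[A] F) :
    psiI β B I hI (LinearMap.baseChange B β x) = x := by
  rw [psiI_apply, ← alphaL_apply β B I hI, LinearEquiv.symm_apply_apply]

lemma mk_baseChange_psiI (x : B ⊗[A] R) :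
    Ideal.Quotient.mk I (LinearMap.baseChange B β (psiI β B I hI x))
      = Ideal.Quotient.mk I x := by
  rw [← alphaL_apply β B I hI, psiI_apply, LinearEquiv.apply_symm_apply]

lemma psiI_eq_zero_iff (x : B ⊗[A] R) :
    psiI β B I hI x = 0 ↔ x ∈ I := by
  rw [psiI_apply, LinearEquiv.map_eq_zero_iff, Ideal.Quotient.eq_zero_iff_mem]

/-- Recovering the structure constants from an ideal. -/
noncomputable def idealToV : Fin n × R → B := fun p =>
  (b.baseChange B).repr (psiI β B I hI ((1:B) ⊗ₜ[A] p.2)) p.1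

lemma psiI_tmul_one (r : R) :
    psiI β B I hI ((1:B) ⊗ₜ[A] r)
      = ∑ j, idealToV b β B I hI (j, r) • ((1:B) ⊗ₜ[A] b j) := by
  conv_lhs => rw [← (b.baseChange B).sum_repr (psiI β B I hI ((1:B) ⊗ₜ[A] r))]
  exact Finset.sum_congr rfl fun j _ => by rw [Module.Basis.baseChange_apply]; rfl

lemma rel_idealToV : Rel b β B (idealToV b β B I hI) := by
  refine ⟨fun i r s => ?_, fun i a r => ?_, fun i j => ?_, fun i r s => ?_⟩
  · simp [idealToV, TensorProduct.tmul_add]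
  · have h1 : (1:B) ⊗ₜ[A] (a • r) = a • ((1:B) ⊗ₜ[A] r) := by
      rw [TensorProduct.tmul_smul]
    simp only [idealToV, h1, LinearMap.map_smul_of_tower]
    rw [← algebraMap_smul B a (psiI β B I hI ((1:B) ⊗ₜ[A] r)), map_smul,
      Finsupp.smul_apply, smul_eq_mul]
  · have h1 : (1:B) ⊗ₜ[A] (β (b j))
        = LinearMap.baseChange B β ((1:B) ⊗ₜ[A] b j) := by
      rw [LinearMap.baseChange_tmul]
    rw [idealToV, h1, psiI_baseChange, ← Module.Basis.baseChange_apply B b j,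
      Module.Basis.repr_self, Finsupp.single_apply]
    simp [eq_comm]
  · -- multiplicativity
    have hker : ((1:B) ⊗ₜ[A] s)
        - LinearMap.baseChange B β (psiI β B I hI ((1:B) ⊗ₜ[A] s)) ∈ I := by
      rw [← Ideal.Quotient.eq_zero_iff_mem, map_sub, mk_baseChange_psiI, sub_self]
    have hmem : ((1:B) ⊗ₜ[A] r) * (((1:B) ⊗ₜ[A] s)
        - LinearMap.baseChange B β (psiI β B I hI ((1:B) ⊗ₜ[A] s))) ∈ I :=
      Ideal.mul_mem_left _ _ hker
    have hmk : Ideal.Quotient.mk I (((1:B) ⊗ₜ[A] r) * ((1:B) ⊗ₜ[A] s))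
        = Ideal.Quotient.mk I (((1:B) ⊗ₜ[A] r)
          * LinearMap.baseChange B β (psiI β B I hI ((1:B) ⊗ₜ[A] s))) := by
      rw [Ideal.Quotient.mk_eq_mk_iff_sub_mem, ← mul_sub]
      exact hmem
    have hpsi : psiI β B I hI (((1:B) ⊗ₜ[A] r) * ((1:B) ⊗ₜ[A] s))
        = psiI β B I hI (((1:B) ⊗ₜ[A] r)
          * LinearMap.baseChange B β (psiI β B I hI ((1:B) ⊗ₜ[A] s))) := by
      rw [psiI_apply, psiI_apply, hmk]
    have expand1 : ((1:B) ⊗ₜ[A] r) * ((1:B) ⊗ₜ[A] s) = (1:B) ⊗ₜ[A] (r * s) := by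
      simp [Algebra.TensorProduct.tmul_mul_tmul]
    rw [expand1] at hpsi
    rw [psiI_tmul_one b β B I hI s] at hpsi
    have expand2 : ((1:B) ⊗ₜ[A] r) * LinearMap.baseChange B β
          (∑ j, idealToV b β B I hI (j, s) • ((1:B) ⊗ₜ[A] b j))
        = ∑ j, idealToV b β B I hI (j, s) • ((1:B) ⊗ₜ[A] (r * β (b j))) := by
      rw [map_sum, Finset.mul_sum]
      refine Finset.sum_congr rfl fun j _ => ?_
      rw [LinearMap.map_smul, LinearMap.baseChange_tmul, mul_smul_comm]
      congr 1
      simp [Algebra.TensorProduct.tmul_mul_tmul]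
    rw [expand2] at hpsi
    simp only [map_sum, LinearMap.map_smul] at hpsi
    rw [psiI_tmul_one b β B I hI (r * s)] at hpsi
    have h3 := congrArg (fun z => ((b.baseChange B).repr z) i) hpsi
    simp only [map_sum, map_smul, Finsupp.coe_finset_sum,
      Finset.sum_apply, Finsupp.smul_apply, smul_eq_mul] at h3
    simpa [idealToV, Module.Basis.baseChange_repr_tmul, Module.Basis.repr_self, Finsupp.single_apply,
      mul_ite, mul_one, mul_zero, Finset.sum_ite_eq, Finset.sum_ite_eq'] using h3

end Reverse

section RoundTrip

variable (b β B) {v : Fin n × R → B}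

lemma psiI_relIdeal (hv : Rel b β B v) (x : B ⊗[A] R) :
    psiI β B (relIdeal hv) (relIdeal_bijective hv) x = psi hv x := by
  apply (alphaL β B (relIdeal hv) (relIdeal_bijective hv)).injective
  rw [alphaL_apply, alphaL_apply, mk_baseChange_psiI, Ideal.Quotient.mk_eq_mk_iff_sub_mem]
  show psi hv _ = 0
  rw [map_sub, psi_baseChange, sub_self]

lemma idealToV_relIdeal (hv : Rel b β B v) :
    idealToV b β B (relIdeal hv) (relIdeal_bijective hv) = v := by
  funext p
  obtain ⟨i, r⟩ := p
  show ((b.baseChange B).repr (psiI β B _ _ ((1:B) ⊗ₜ[A] r))) i = v (i, r)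
  rw [psiI_relIdeal b β B hv, psi_tmul]
  have : ∀ j : Fin n, ((1:B) * v (j, r)) ⊗ₜ[A] b j = v (j, r) • (b.baseChange B) j := by
    intro j
    rw [one_mul, Module.Basis.baseChange_apply, smul_tmul', smul_eq_mul, mul_one]
  simp_rw [this]
  rw [Module.Basis.repr_sum_self]

lemma psiI_eq_psi (I : Ideal (B ⊗[A] R))
    (hI : Function.Bijective fun x : B ⊗[A] F =>
      Ideal.Quotient.mk I (LinearMap.baseChange B β x)) (x : B ⊗[A] R) :
    psi (rel_idealToV b β B I hI) x = psiI β B I hI x := by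
  induction x with
  | zero => rw [map_zero, map_zero]
  | add x y hx hy => rw [map_add, map_add, hx, hy]
  | tmul c r =>
    rw [psi_tmul]
    have hc : c ⊗ₜ[A] r = c • ((1:B) ⊗ₜ[A] r) := by
      rw [smul_tmul', smul_eq_mul, mul_one]
    rw [hc, LinearMap.map_smul, psiI_tmul_one b β B I hI r, Finset.smul_sum]
    refine Finset.sum_congr rfl fun j _ => ?_
    rw [smul_smul, smul_tmul', smul_eq_mul, mul_one]

lemma relIdeal_idealToV (I : Ideal (B ⊗[A] R))
    (hI : Function.Bijective fun x : B ⊗[A] F =>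
      Ideal.Quotient.mk I (LinearMap.baseChange B β x)) :
    relIdeal (rel_idealToV b β B I hI) = I := by
  ext x
  rw [mem_relIdeal_iff, psiI_eq_psi b β B I hI, psiI_eq_zero_iff]

/-- The main set-level equivalence between structure constants and ideals. -/
noncomputable def equivB : {v : Fin n × R → B // Rel b β B v} ≃
    {I : Ideal (B ⊗[A] R) //
      Function.Bijective fun x : B ⊗[A] F =>
        Ideal.Quotient.mk I (LinearMap.baseChange B β x)} where
  toFun v := ⟨relIdeal v.2, relIdeal_bijective v.2⟩
  invFun I := ⟨idealToV b β B I.1 I.2, rel_idealToV b β B I.1 I.2⟩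
  left_inv v := Subtype.ext (idealToV_relIdeal b β B v.2)
  right_inv I := Subtype.ext (relIdeal_idealToV b β B I.1 I.2)

end RoundTrip

section Natural

variable {b : Module.Basis (Fin n) A F} {β : F →ₗ[A] R}
variable {B B' : Type u} [CommRing B] [Algebra A B] [CommRing B'] [Algebra A B']
variable (g : B →ₐ[A] B') {v : Fin n × R → B}

lemma rel_comp (hv : Rel b β B v) : Rel b β B' (fun p => g (v p)) := by
  refine ⟨fun i r s => ?_, fun i a r => ?_, fun i j => ?_, fun i r s => ?_⟩ <;> dsimp only
  · rw [hv.1, map_add]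
  · rw [hv.2.1, map_mul, AlgHom.commutes]
  · rw [hv.2.2.1, apply_ite g, map_one, map_zero]
  · rw [hv.2.2.2, map_sum]
    exact Finset.sum_congr rfl fun j _ => by rw [map_mul]

lemma psi_map (hv : Rel b β B v) (x : B ⊗[A] R) :
    psi (rel_comp g hv) (Algebra.TensorProduct.map g (AlgHom.id A R) x)
      = LinearMap.rTensor F g.toLinearMap (psi hv x) := by
  induction x with
  | zero => simp
  | add x y hx hy => simp [hx, hy]
  | tmul c r =>
    rw [Algebra.TensorProduct.map_tmul, AlgHom.coe_id, id_eq, psi_tmul, psi_tmul, map_sum]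
    exact Finset.sum_congr rfl fun i _ => by
      rw [LinearMap.rTensor_tmul, AlgHom.toLinearMap_apply, map_mul]

lemma baseChange_map (x : B ⊗[A] F) :
    Algebra.TensorProduct.map g (AlgHom.id A R) (LinearMap.baseChange B β x)
      = LinearMap.baseChange B' β (LinearMap.rTensor F g.toLinearMap x) := by
  induction x with
  | zero => simp
  | add x y hx hy => simp [hx, hy]
  | tmul c y =>
    rw [LinearMap.baseChange_tmul, Algebra.TensorProduct.map_tmul, AlgHom.coe_id, id_eq,
      LinearMap.rTensor_tmul, LinearMap.baseChange_tmul, AlgHom.toLinearMap_apply]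

lemma relIdeal_map (hv : Rel b β B v) :
    relIdeal (rel_comp g hv)
      = Ideal.map (Algebra.TensorProduct.map g (AlgHom.id A R)) (relIdeal hv) := by
  refine le_antisymm ?_ (Ideal.map_le_iff_le_comap.mpr fun x hx => ?_)
  · intro k hk
    have hk0 : psi (rel_comp g hv) k = 0 := hk
    have hsub : ∀ x : B' ⊗[A] R,
        x - LinearMap.baseChange B' β (psi (rel_comp g hv) x)
          ∈ Ideal.map (Algebra.TensorProduct.map g (AlgHom.id A R)) (relIdeal hv) := by
      intro x
      induction x with
      | zero => simpa using Ideal.zero_mem _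
      | add x y hx hy =>
        have : (x + y) - LinearMap.baseChange B' β (psi (rel_comp g hv) (x + y))
            = (x - LinearMap.baseChange B' β (psi (rel_comp g hv) x))
              + (y - LinearMap.baseChange B' β (psi (rel_comp g hv) y)) := by
          rw [map_add, map_add]; ring
        rw [this]; exact Ideal.add_mem _ hx hy
      | tmul c s =>
        have hc : c ⊗ₜ[A] s = c • ((1:B') ⊗ₜ[A] s) := by
          rw [smul_tmul', smul_eq_mul, mul_one]
        have h1 : ((1:B') ⊗ₜ[A] s)
            - LinearMap.baseChange B' β (psi (rel_comp g hv) ((1:B') ⊗ₜ[A] s))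
            = Algebra.TensorProduct.map g (AlgHom.id A R)
              (((1:B) ⊗ₜ[A] s) - LinearMap.baseChange B β (psi hv ((1:B) ⊗ₜ[A] s))) := by
          rw [map_sub]
          congr 1
          · rw [Algebra.TensorProduct.map_tmul, map_one, AlgHom.coe_id, id_eq]
          · rw [baseChange_map, ← psi_map g hv]
            congr 1
            rw [Algebra.TensorProduct.map_tmul, map_one, AlgHom.coe_id, id_eq]
        have hmem : ((1:B) ⊗ₜ[A] s)
            - LinearMap.baseChange B β (psi hv ((1:B) ⊗ₜ[A] s)) ∈ relIdeal hv :=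
          psi_sub_mem hv _
        rw [hc, psi_smul, LinearMap.map_smul, ← smul_sub, h1, Algebra.smul_def]
        exact Ideal.mul_mem_left _ _ (Ideal.mem_map_of_mem _ hmem)
    have := hsub k
    rwa [hk0, map_zero, sub_zero] at this
  · show psi (rel_comp g hv) (Algebra.TensorProduct.map g (AlgHom.id A R) x) = 0
    rw [psi_map g hv]
    have hx0 : psi hv x = 0 := hx
    rw [hx0, map_zero]

end Natural

section Present

open MvPolynomial

variable (b : Module.Basis (Fin n) A F) (β : F →ₗ[A] R)

/-- The relations cutting out the representing algebra inside a polynomial ring. -/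
def relSet : Set (MvPolynomial (Fin n × R) A) :=
  {p | (∃ i r s, p = X (i, r + s) - X (i, r) - X (i, s)) ∨
       (∃ i a r, p = X (i, a • r) - C a * X (i, r)) ∨
       (∃ i j, p = X (i, β (b j)) - if i = j then 1 else 0) ∨
       (∃ i r s, p = X (i, r * s) - ∑ j, X (j, s) * X (i, r * β (b j)))}

variable (B : Type u) [CommRing B] [Algebra A B]

lemma rel_of_algHom (G : MvPolynomial (Fin n × R) A →ₐ[A] B)
    (hG : ∀ q ∈ relSet b β, G q = 0) : Rel b β B (fun p => G (X p)) := by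
  refine ⟨fun i r s => ?_, fun i a r => ?_, fun i j => ?_, fun i r s => ?_⟩ <;> dsimp only
  · have := hG _ (Or.inl ⟨i, r, s, rfl⟩)
    rw [map_sub, map_sub, sub_sub, sub_eq_zero] at this
    rw [this]
  · have := hG _ (Or.inr (Or.inl ⟨i, a, r, rfl⟩))
    rw [map_sub, map_mul, algHom_C, sub_eq_zero] at this
    rw [this]
  · have := hG _ (Or.inr (Or.inr (Or.inl ⟨i, j, rfl⟩)))
    rw [map_sub, sub_eq_zero, apply_ite G, map_one, map_zero] at this
    rw [this]
  · have := hG _ (Or.inr (Or.inr (Or.inr ⟨i, r, s, rfl⟩)))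
    rw [map_sub, map_sum, sub_eq_zero] at this
    rw [this]
    exact Finset.sum_congr rfl fun j _ => by rw [map_mul]

lemma aeval_rel {v : Fin n × R → B} (hv : Rel b β B v) :
    ∀ q ∈ relSet b β, (aeval v) q = 0 := by
  rintro q (⟨i, r, s, rfl⟩ | ⟨i, a, r, rfl⟩ | ⟨i, j, rfl⟩ | ⟨i, r, s, rfl⟩)
  · rw [map_sub, map_sub, aeval_X, aeval_X, aeval_X, hv.1, sub_sub, sub_self]
  · rw [map_sub, map_mul, aeval_X, aeval_X, algHom_C, hv.2.1, sub_self]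
  · rw [map_sub, aeval_X, hv.2.2.1, apply_ite (aeval v), map_one, map_zero, sub_self]
  · rw [map_sub, aeval_X, hv.2.2.2, map_sum, sub_eq_zero]
    exact Finset.sum_congr rfl fun j _ => by rw [map_mul, aeval_X, aeval_X]

/-- The representing-algebra side of the equivalence. -/
noncomputable def equivA :
    ((MvPolynomial (Fin n × R) A ⧸ Ideal.span (relSet b β)) →ₐ[A] B) ≃
      {v : Fin n × R → B // Rel b β B v} where
  toFun h := ⟨fun p => h (Ideal.Quotient.mkₐ A (Ideal.span (relSet b β)) (X p)),
    rel_of_algHom b β B (h.comp (Ideal.Quotient.mkₐ A _)) fun q hq => by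
      have : Ideal.Quotient.mkₐ A (Ideal.span (relSet b β)) q = 0 :=
        Ideal.Quotient.eq_zero_iff_mem.mpr (Ideal.subset_span hq)
      rw [AlgHom.comp_apply, this, map_zero]⟩
  invFun v := Ideal.Quotient.liftₐ (Ideal.span (relSet b β)) (aeval v.1)
    (fun a ha => by
      have hle : Ideal.span (relSet b β) ≤ RingHom.ker (aeval v.1 : _ →ₐ[A] B).toRingHom :=
        Ideal.span_le.mpr fun q hq => RingHom.mem_ker.mpr (aeval_rel b β B v.2 q hq)
      exact RingHom.mem_ker.mp (hle ha))
  left_inv h := by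
    refine Ideal.Quotient.algHom_ext A (MvPolynomial.algHom_ext fun p => ?_)
    simp only [AlgHom.comp_apply, Ideal.Quotient.mkₐ_eq_mk, Ideal.Quotient.liftₐ_apply,
      Ideal.Quotient.lift_mk, RingHom.coe_coe, aeval_X]
    exact (Ideal.Quotient.lift_mk ..).trans (aeval_X ..)
  right_inv v := Subtype.ext (funext fun p => by
    simp only [Ideal.Quotient.mkₐ_eq_mk, Ideal.Quotient.liftₐ_apply,
      Ideal.Quotient.lift_mk, RingHom.coe_coe, aeval_X]
    exact (Ideal.Quotient.lift_mk ..).trans (aeval_X ..))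

end Present

end B

end Stmt9Aux

/-- Let `A` be a commutative ring, `R` a commutative `A`-algebra, `F`
a free `A`-module of rank `n` with basis `T₁, …, Tₙ`, `e = T₁`, and `β : F → R` an
`A`-linear map with `β e = 1`.  The functor sending a commutative `A`-algebra `B` to the
set of ideals `I ⊆ B ⊗ R` for which `B ⊗ F → B ⊗ R → (B ⊗ R)/I` is bijective (with an
`A`-algebra map `B → B'` acting by taking the generated ideal of the image) is
corepresentable: there are a commutative `A`-algebra `H` and bijections
`Hom_{A-alg}(H, B) ≃ Hilb^β(B)`, natural in `B`. -/
theorem stmt9 {A R F : Type u} [CommRing A] [CommRing R] [Algebra A R]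
    [AddCommGroup F] [Module A F] (n : ℕ) (hn : 0 < n)
    (b : Module.Basis (Fin n) A F) (β : F →ₗ[A] R) (hβ : β (b ⟨0, hn⟩) = 1) :
    ∃ (H : Type u) (_ : CommRing H) (_ : Algebra A H),
      ∃ e : ∀ (B : Type u) [CommRing B] [Algebra A B],
        (H →ₐ[A] B) ≃ {I : Ideal (TensorProduct A B R) //
          Function.Bijective fun x : TensorProduct A B F =>
            Ideal.Quotient.mk I (LinearMap.baseChange B β x)},
      ∀ (B B' : Type u) [CommRing B] [Algebra A B] [CommRing B'] [Algebra A B']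
        (g : B →ₐ[A] B') (h : H →ₐ[A] B),
        (e B' (g.comp h)).1 =
          Ideal.map (Algebra.TensorProduct.map g (AlgHom.id A R)) (e B h).1 := by
  refine ⟨MvPolynomial (Fin n × R) A ⧸ Ideal.span (Stmt9Aux.relSet b β),
    inferInstance, inferInstance,
    fun B _ _ => (Stmt9Aux.equivA b β B).trans (Stmt9Aux.equivB b β B), ?_⟩
  intro B B' _ _ _ _ g h
  exact Stmt9Aux.relIdeal_map g ((Stmt9Aux.equivA b β B) h).2
end

section
/- Let A be a commutative ring, R a commutative A-algebra, F a free A-module of finite rank with distinguished element e part of a basis, and β : F → R an A-linear map with β(e) = 1_R. Then the map u ↦ ker(u) is a bijection from the set of A-linear maps u : R → F such that the kernel of u is an ideal of R and u ∘ β = id_F, onto the set of ideals I of R such that the composite F → R → R/I (first map β, second the quotient map) is bijective. -/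
/-- Let `A` be a commutative ring, `R` a commutative `A`-algebra, `F`
a free `A`-module of finite rank with distinguished basis element `e`, and `β : F → R`
an `A`-linear map with `β e = 1`.  Then `u ↦ ker u` is a bijection from the set of
`A`-linear maps `u : R → F` whose kernel is an ideal of `R` and with `u ∘ β = id_F`,
onto the set of ideals `I ⊆ R` such that `F → R → R/I` is bijective. -/
theorem stmt10 {A R F : Type*} [CommRing A] [CommRing R] [Algebra A R]
    [AddCommGroup F] [Module A F]
    {ι : Type*} [Fintype ι] (b : Module.Basis ι A F) (i₀ : ι) (e : F) (he : e = b i₀)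
    (β : F →ₗ[A] R) (hβ : β e = 1) :
    Set.BijOn (fun u : R →ₗ[A] F => {r : R | u r = 0})
      {u : R →ₗ[A] F | (∀ r r' : R, u r = 0 → u (r * r') = 0) ∧ ∀ x : F, u (β x) = x}
      {s : Set R | ∃ I : Ideal R, (I : Set R) = s ∧
        Function.Bijective fun x : F => Ideal.Quotient.mk I (β x)} := by
  refine ⟨?_, ?_, ?_⟩
  · -- maps to
    rintro u ⟨hker, hid⟩
    let I : Ideal R :=
      { carrier := setOf (fun r : R => u r = 0)
        add_mem' := by
          intro a c ha hc
          change u a = 0 at ha; change u c = 0 at hc; change u (a + c) = 0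
          rw [map_add, ha, hc, add_zero]
        zero_mem' := by show u 0 = 0; simp
        smul_mem' := by
          intro c x hx
          simp only [Set.mem_setOf_eq, smul_eq_mul] at *
          rw [mul_comm]
          exact hker x c hx }
    refine ⟨I, rfl, ?_, ?_⟩
    · -- injective
      intro x y hxy
      have hxy' : Ideal.Quotient.mk I (β x) = Ideal.Quotient.mk I (β y) := hxy
      have h : Ideal.Quotient.mk I (β x - β y) = 0 := by
        rw [map_sub, hxy', sub_self]
      rw [Ideal.Quotient.eq_zero_iff_mem] at h
      have h2 : u (β x - β y) = 0 := h
      rw [map_sub, hid, hid] at h2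
      exact sub_eq_zero.mp h2
    · -- surjective
      intro r
      obtain ⟨r, rfl⟩ := Ideal.Quotient.mk_surjective r
      refine ⟨u r, ?_⟩
      show Ideal.Quotient.mk I (β (u r)) = Ideal.Quotient.mk I r
      rw [Ideal.Quotient.eq]
      show u (β (u r) - r) = 0
      rw [map_sub, hid, sub_self]
  · -- InjOn
    rintro u ⟨hker, hid⟩ u' ⟨hker', hid'⟩ h
    simp only [Set.ext_iff, Set.mem_setOf_eq] at h
    ext r
    have h1 : u (r - β (u r)) = 0 := by rw [map_sub, hid, sub_self]
    have h3 : u' (r - β (u r)) = 0 := (h _).mp h1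
    rw [map_sub, hid', sub_eq_zero] at h3
    exact h3.symm
  · -- SurjOn
    rintro s ⟨I, rfl, hbij⟩
    set g : F →ₗ[A] R ⧸ I := (Ideal.Quotient.mkₐ A I).toLinearMap.comp β with hg
    have hgbij : Function.Bijective g := hbij
    set E : F ≃ₗ[A] R ⧸ I := LinearEquiv.ofBijective g hgbij with hE
    set u : R →ₗ[A] F :=
      (E.symm : R ⧸ I →ₗ[A] F).comp (Ideal.Quotient.mkₐ A I).toLinearMap with hu
    have key : ∀ r : R, u r = 0 ↔ r ∈ I := by
      intro r
      have : u r = E.symm (Ideal.Quotient.mk I r) := rfl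
      rw [this, map_eq_zero_iff _ E.symm.injective, Ideal.Quotient.eq_zero_iff_mem]
    refine ⟨u, ⟨⟨?_, ?_⟩, ?_⟩⟩
    · intro r r' hr
      rw [key] at hr ⊢
      exact I.mul_mem_right r' hr
    · intro x
      have : u (β x) = E.symm (E x) := rfl
      rw [this, E.symm_apply_apply]
    · ext r
      exact key r
end

section
/- Let k be a field and Q a commutative k-algebra of finite dimension n ≥ 1 as a k-vector space, generated as a k-algebra by a subset s ⊆ Q. Then the monomials of degree at most n − 1 in the elements of s (i.e., all products of fewer than n elements of s, together with 1) span Q as a k-vector space. -/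
/-!
Let `M = span k ({1} ∪ s)`, so that `M ^ i` is spanned by the monomials of degree at most `i`.
The chain `M ^ 0 ≤ M ^ 1 ≤ ⋯` is constant from the first index where two consecutive terms
agree, and that stable term is closed under multiplication, hence a subalgebra containing `s`,
hence all of `Q`. Since `M ^ 0 = k ∙ 1` has dimension `1` and every strict step raises the
dimension, the chain stabilizes by step `n - 1`.
-/

open Module Submodule
open scoped Pointwise

theorem pow_eq_of_pow_succ_eq {M : Type*} [Monoid M] {a : M} {i : ℕ} (h : a ^ (i + 1) = a ^ i)
    {j : ℕ} (hij : i ≤ j) : a ^ j = a ^ i := by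
  induction j, hij using Nat.le_induction with
  | base => rfl
  | succ j _ ih => rw [pow_succ, ih, ← pow_succ, h]

theorem Set.insert_one_pow {M : Type*} [Monoid M] (s : Set M) (i : ℕ) :
    insert 1 s ^ i = {q | ∃ l : List M, (∀ x ∈ l, x ∈ s) ∧ l.length ≤ i ∧ l.prod = q} := by
  induction i with
  | zero => ext q; simp [eq_comm]
  | succ i ih =>
    ext q
    rw [pow_succ', Set.mem_mul, ih]
    constructor
    · rintro ⟨a, ha, _, ⟨l, hl, hlen, rfl⟩, rfl⟩
      rcases ha with rfl | ha
      · exact ⟨l, hl, by omega, (one_mul _).symm⟩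
      · exact ⟨a :: l, by simpa [ha] using hl, by simpa using hlen, rfl⟩
    · rintro ⟨_ | ⟨a, l⟩, hl, hlen, rfl⟩
      · exact ⟨1, Set.mem_insert _ _, 1, ⟨[], by simp⟩, one_mul _⟩
      · simp only [List.mem_cons, forall_eq_or_imp] at hl
        exact ⟨a, Or.inr hl.1, l.prod, ⟨l, hl.2, by simpa using hlen, rfl⟩, rfl⟩

theorem Submodule.exists_eq_succ_of_monotone {K E : Type*} [DivisionRing K] [AddCommGroup E]
    [Module K E] [FiniteDimensional K E] {V : ℕ → Submodule K E} (hV : Monotone V) :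
    ∃ i, i + finrank K (V 0) ≤ finrank K E ∧ V (i + 1) = V i := by
  by_contra! hstrict
  have hV0 := (V 0).finrank_le
  have hgrow : ∀ i, i ≤ finrank K E - finrank K (V 0) + 1 →
      i + finrank K (V 0) ≤ finrank K (V i) := by
    intro i
    induction i with
    | zero => simp
    | succ i ih =>
      intro hi
      have hlt : V i < V (i + 1) := (hV i.le_succ).lt_of_ne (hstrict i (by omega)).symm
      have hrank_lt := finrank_lt_finrank_of_lt hlt
      omega
  have hbig := hgrow _ le_rfl
  have hsmall := (V (finrank K E - finrank K (V 0) + 1)).finrank_le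
  omega

theorem Submodule.adjoin_le_pow_of_pow_succ_eq {R A : Type*} [CommSemiring R] [Semiring A]
    [Algebra R A] {M : Submodule R A} (hM : 1 ≤ M) {i : ℕ} (h : M ^ (i + 1) = M ^ i) {s : Set A}
    (hs : s ⊆ M) : Subalgebra.toSubmodule (Algebra.adjoin R s) ≤ M ^ i := by
  have hone : (1 : A) ∈ M ^ i := one_le.1 (one_le_pow_of_one_le' hM i)
  have hmul (x y : A) (hx : x ∈ M ^ i) (hy : y ∈ M ^ i) : x * y ∈ M ^ i := by
    rw [← pow_eq_of_pow_succ_eq h (Nat.le_add_left i i), pow_add]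
    exact mul_mem_mul hx hy
  have hsi : s ⊆ ↑(M ^ i) := by
    rw [← h]
    have : M ^ 1 ≤ M ^ (i + 1) := pow_le_pow_right₀ hM (by omega)
    exact hs.trans (by simpa using this)
  exact Algebra.adjoin_le (S := (M ^ i).toSubalgebra hone hmul) hsi

/-- Let `k` be a field and `Q` a commutative `k`-algebra of finite
dimension `n ≥ 1`, generated as a `k`-algebra by a subset `s ⊆ Q`.  Then the products
of fewer than `n` elements of `s` (the empty product being `1`) span `Q` as a
`k`-vector space. -/
theorem stmt11 {k Q : Type*} [Field k] [CommRing Q] [Algebra k Q]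
    [FiniteDimensional k Q] (n : ℕ) (hn : 1 ≤ n)
    (hdim : Module.finrank k Q = n)
    (s : Set Q) (hgen : Algebra.adjoin k s = ⊤) :
    Submodule.span k
      {q : Q | ∃ l : List Q, (∀ x ∈ l, x ∈ s) ∧ l.length < n ∧ l.prod = q} = ⊤ := by
  have : Nontrivial Q := nontrivial_of_finrank_pos (R := k) (by omega)
  set M := span k (insert 1 s)
  have hM : 1 ≤ M := one_le.2 (subset_span (Set.mem_insert _ _))
  obtain ⟨i, hi, hstall⟩ :=
    exists_eq_succ_of_monotone (V := (M ^ ·)) fun _ _ ↦ pow_le_pow_right₀ hM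
  have hrank : finrank k ↥(M ^ 0) = 1 := by
    rw [pow_zero, one_eq_span, finrank_span_singleton one_ne_zero]
  have hmonomials : {q : Q | ∃ l : List Q, (∀ x ∈ l, x ∈ s) ∧ l.length < n ∧ l.prod = q} =
      insert 1 s ^ (n - 1) := by
    simp only [Set.insert_one_pow, Nat.lt_iff_le_pred hn]
  rw [hmonomials, ← span_pow, eq_top_iff, ← Algebra.top_toSubmodule, ← hgen]
  exact (adjoin_le_pow_of_pow_succ_eq hM hstall
    ((Set.subset_insert _ _).trans subset_span)).trans
    (pow_le_pow_right₀ hM (show i ≤ n - 1 by omega))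
end

section
/- Let R be a commutative ring with an ℕ-grading (a graded ring structure R = ⊕_{d≥0} R_d), and let q_1, …, q_k be homogeneous prime ideals of R none of which contains the irrelevant ideal R_+ = ⊕_{d>0} R_d. Then there exists a homogeneous element g ∈ R of positive degree such that g ∉ q_i for i = 1, …, k. -/
open DirectSum

/-- From a homogeneous ideal `I` not contained in a homogeneous ideal `J`,
extract a homogeneous element of `I` not in `J`. -/
lemma stmt12_aux_exists_hom {R : Type*} [CommRing R] (𝒜 : ℕ → AddSubgroup R) [GradedRing 𝒜]
    {I J : Ideal R} (hI : Ideal.IsHomogeneous 𝒜 I) (hJ : Ideal.IsHomogeneous 𝒜 J)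
    (h : ¬ I ≤ J) : ∃ (x : R) (d : ℕ), x ∈ 𝒜 d ∧ x ∈ I ∧ x ∉ J := by
  obtain ⟨y, hyI, hyJ⟩ := SetLike.not_le_iff_exists.mp h
  rw [hJ.mem_iff 𝒜] at hyJ
  push_neg at hyJ
  obtain ⟨d, hd⟩ := hyJ
  exact ⟨(decompose 𝒜 y d : R), d, SetLike.coe_mem _, hI d hyI, hd⟩

/-- A homogeneous prime not containing the irrelevant ideal avoids some homogeneous
element of positive degree. -/
lemma stmt12_aux_posdeg {R : Type*} [CommRing R] (𝒜 : ℕ → AddSubgroup R) [GradedRing 𝒜]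
    {J : Ideal R} (hJ : Ideal.IsHomogeneous 𝒜 J)
    (h : ¬ (HomogeneousIdeal.irrelevant 𝒜).toIdeal ≤ J) :
    ∃ (x : R) (d : ℕ), 0 < d ∧ x ∈ 𝒜 d ∧ x ∉ J := by
  obtain ⟨x, d, hxd, hxI, hxJ⟩ :=
    stmt12_aux_exists_hom 𝒜 ((HomogeneousIdeal.irrelevant 𝒜).isHomogeneous) hJ h
  refine ⟨x, d, ?_, hxd, hxJ⟩
  rcases Nat.eq_zero_or_pos d with hd0 | hd; swap
  · exact hd
  · exfalso
    subst hd0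
    have h0 : (decompose 𝒜 x 0 : R) = 0 := hxI
    rw [decompose_of_mem_same 𝒜 hxd] at h0
    exact hxJ (h0 ▸ J.zero_mem)

/-- A finite product of homogeneous elements is homogeneous. -/
lemma stmt12_aux_prod_hom {R : Type*} [CommRing R] (𝒜 : ℕ → AddSubgroup R) [GradedRing 𝒜]
    {ι : Type*} (s : Finset ι) (f : ι → R) (h : ∀ i ∈ s, ∃ d, f i ∈ 𝒜 d) :
    ∃ d, (∏ i ∈ s, f i) ∈ 𝒜 d := by
  classical
  induction s using Finset.induction_on with
  | empty => exact ⟨0, by simpa using SetLike.one_mem_graded 𝒜⟩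
  | insert a t hni ih =>
    obtain ⟨d1, hd1⟩ := h a (t.mem_insert_self a)
    obtain ⟨d2, hd2⟩ := ih fun i hi => h i (Finset.mem_insert_of_mem hi)
    exact ⟨d1 + d2, by rw [Finset.prod_insert hni]; exact SetLike.mul_mem_graded hd1 hd2⟩

/-- Homogeneous prime avoidance for a finite set of ideals. -/
lemma stmt12_aux_main {R : Type*} [CommRing R] (𝒜 : ℕ → AddSubgroup R) [GradedRing 𝒜]
    (s : Finset (Ideal R))
    (hhom : ∀ p ∈ s, Ideal.IsHomogeneous 𝒜 p)
    (hprime : ∀ p ∈ s, p.IsPrime)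
    (hirr : ∀ p ∈ s, ¬ (HomogeneousIdeal.irrelevant 𝒜).toIdeal ≤ p) :
    ∃ (g : R) (d : ℕ), 0 < d ∧ g ∈ 𝒜 d ∧ ∀ p ∈ s, g ∉ p := by
  classical
  induction s using Finset.strongInduction with
  | _ s ih =>
  by_cases hcomp : ∃ p ∈ s, ∃ p' ∈ s, p ≠ p' ∧ p ≤ p'
  · -- remove a redundant ideal
    obtain ⟨p, hp, p', hp', hne, hle⟩ := hcomp
    obtain ⟨g, d, hd, hgd, hg⟩ := ih (s.erase p) (Finset.erase_ssubset hp)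
      (fun q hq => hhom q (Finset.mem_of_mem_erase hq))
      (fun q hq => hprime q (Finset.mem_of_mem_erase hq))
      (fun q hq => hirr q (Finset.mem_of_mem_erase hq))
    refine ⟨g, d, hd, hgd, fun q hq => ?_⟩
    by_cases hqp : q = p
    · subst hqp
      exact fun hmem => hg p' (Finset.mem_erase.mpr ⟨hne.symm, hp'⟩) (hle hmem)
    · exact hg q (Finset.mem_erase.mpr ⟨hqp, hq⟩)
  · push_neg at hcomp
    rcases s.eq_empty_or_nonempty with rfl | ⟨q0, hq0⟩
    · exact ⟨0, 1, one_pos, (𝒜 1).zero_mem, by simp⟩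
    · obtain ⟨a, da, hda, hada, hna⟩ := ih (s.erase q0) (Finset.erase_ssubset hq0)
        (fun q hq => hhom q (Finset.mem_of_mem_erase hq))
        (fun q hq => hprime q (Finset.mem_of_mem_erase hq))
        (fun q hq => hirr q (Finset.mem_of_mem_erase hq))
      by_cases haq0 : a ∉ q0
      · refine ⟨a, da, hda, hada, fun q hq => ?_⟩
        by_cases hqq0 : q = q0
        · exact hqq0 ▸ haq0
        · exact hna q (Finset.mem_erase.mpr ⟨hqq0, hq⟩)
      · push_neg at haq0
        -- b : homogeneous of positive degree, not in q0
        obtain ⟨b, db, hdb, hbd, hbq0⟩ := stmt12_aux_posdeg 𝒜 (hhom q0 hq0) (hirr q0 hq0)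
        -- for each p ∈ s.erase q0 choose homogeneous element of p not in q0
        have hchoice : ∀ p ∈ s.erase q0, ∃ (x : R), (∃ d, x ∈ 𝒜 d) ∧ x ∈ p ∧ x ∉ q0 := by
          intro p hp
          have hpmem := Finset.mem_of_mem_erase hp
          have hne : p ≠ q0 := (Finset.mem_erase.mp hp).1
          have hnle : ¬ p ≤ q0 := hcomp p hpmem q0 hq0 hne
          obtain ⟨x, d, h1, h2, h3⟩ := stmt12_aux_exists_hom 𝒜 (hhom p hpmem) (hhom q0 hq0) hnle
          exact ⟨x, ⟨d, h1⟩, h2, h3⟩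
        choose f hfhom hfmem hfnot using hchoice
        set c0 : R := ∏ p ∈ (s.erase q0).attach, f p.1 p.2 with hc0
        obtain ⟨dc0, hdc0⟩ := stmt12_aux_prod_hom 𝒜 (s.erase q0).attach
          (fun p => f p.1 p.2) (fun p _ => hfhom p.1 p.2)
        set c : R := b * c0 with hc
        have hcd : c ∈ 𝒜 (db + dc0) := SetLike.mul_mem_graded hbd hdc0
        have hq0p : q0.IsPrime := hprime q0 hq0
        -- c ∉ q0
        have hcq0 : c ∉ q0 := by
          intro hmem
          rcases hq0p.mem_or_mem hmem with h | h
          · exact hbq0 h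
          · rw [hc0, Ideal.IsPrime.prod_mem_iff] at h
            obtain ⟨p, _, hp⟩ := h
            exact hfnot p.1 p.2 hp
        -- c ∈ p for every p ∈ s.erase q0
        have hcp : ∀ p (hp : p ∈ s.erase q0), c ∈ p := by
          intro p hp
          have heq : c0 = f p hp * ∏ x ∈ (s.erase q0).attach.erase ⟨p, hp⟩, f x.1 x.2 :=
            (Finset.mul_prod_erase _ _ (Finset.mem_attach _ ⟨p, hp⟩)).symm
          have hc0p : c0 ∈ p := heq ▸ Ideal.mul_mem_right _ _ (hfmem p hp)
          exact Ideal.mul_mem_left _ _ hc0p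
        -- the element g
        set dc : ℕ := db + dc0 with hdc
        have hdcpos : 0 < dc := Nat.lt_of_lt_of_le hdb (Nat.le_add_right _ _)
        refine ⟨a ^ dc + c ^ da, da * dc, Nat.mul_pos hda hdcpos, ?_, ?_⟩
        · apply AddSubgroup.add_mem
          · have := SetLike.pow_mem_graded dc hada
            rwa [smul_eq_mul, Nat.mul_comm] at this
          · have := SetLike.pow_mem_graded da hcd
            rwa [smul_eq_mul] at this
        · intro q hq hmem
          by_cases hqq0 : q = q0
          · subst hqq0
            have h1 : a ^ dc ∈ q := Ideal.pow_mem_of_mem _ haq0 _ hdcpos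
            have h2 : c ^ da ∈ q := by
              have := q.sub_mem hmem h1
              simpa using this
            exact hcq0 (hq0p.mem_of_pow_mem _ h2)
          · have hqe : q ∈ s.erase q0 := Finset.mem_erase.mpr ⟨hqq0, hq⟩
            have h2 : c ^ da ∈ q := Ideal.pow_mem_of_mem _ (hcp q hqe) _ hda
            have h1 : a ^ dc ∈ q := by
              have := q.sub_mem hmem h2
              simpa using this
            exact hna q hqe ((hprime q hq).mem_of_pow_mem _ h1)

/-- Let `R` be a commutative ring with an `ℕ`-grading, and let
`q 1, …, q k` be homogeneous prime ideals of `R` none of which contains the irrelevant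
ideal `R₊`.  Then there is a homogeneous element `g` of positive degree with `g ∉ q i`
for all `i`. -/
theorem stmt12 {R : Type*} [CommRing R] (𝒜 : ℕ → AddSubgroup R) [GradedRing 𝒜]
    (k : ℕ) (q : Fin k → Ideal R)
    (hhom : ∀ i, Ideal.IsHomogeneous 𝒜 (q i))
    (hprime : ∀ i, (q i).IsPrime)
    (hirr : ∀ i, ¬ (HomogeneousIdeal.irrelevant 𝒜).toIdeal ≤ q i) :
    ∃ (g : R) (d : ℕ), 0 < d ∧ g ∈ 𝒜 d ∧ ∀ i, g ∉ q i := by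
  classical
  obtain ⟨g, d, hd, hgd, hg⟩ := stmt12_aux_main 𝒜 (Finset.image q Finset.univ)
    (by rintro p hp; obtain ⟨i, _, rfl⟩ := Finset.mem_image.mp hp; exact hhom i)
    (by rintro p hp; obtain ⟨i, _, rfl⟩ := Finset.mem_image.mp hp; exact hprime i)
    (by rintro p hp; obtain ⟨i, _, rfl⟩ := Finset.mem_image.mp hp; exact hirr i)
  exact ⟨g, d, hd, hgd, fun i => hg (q i) (Finset.mem_image_of_mem q (Finset.mem_univ i))⟩
end

section
/- Let A be a commutative ring, n ≥ 1, S a set with a distinguished element s₁, and A[Y] the polynomial ring over A in variables Y_s (s ∈ S). Let φ : A[Y] → M_n(A) be an A-algebra homomorphism, write C = φ(Y_{s₁}), and let e_1, …, e_n be the standard basis column vectors. Then C^{i−1}·e_1 = e_i for i = 1, …, n (equivalently, the composite sending the i-th basis vector through β₁(T_i) = Y_{s₁}^{i−1}, then φ, then evaluation at e_1, is the identity) if and only if C·e_j = e_{j+1} for j = 1, …, n−1 (so C has companion form with arbitrary last column) and, for every s ∈ S, φ(Y_s) lies in the A-span of I_n, C, C², …, C^{n−1}. -/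
/-!
Stepping `C ^ i e₁ = e_{i+1}` once more is exactly the companion condition, so the content is
the span statement. Since `e₁` is cyclic for `C`, a matrix `M` commuting with `C` is determined
by `M e₁`: its `j`-th column is `M C ^ j e₁ = C ^ j M e₁`. Writing `M e₁ = ∑ aₖ eₖ = ∑ aₖ C ^ k e₁`,
the matrix `∑ aₖ C ^ k` also commutes with `C` and agrees with `M` on `e₁`, hence equals `M`.
Each `φ Y_s` commutes with `C = φ Y_{s₁}` because `A[Y]` is commutative.
-/

namespace Matrix

variable {R : Type*} {n : ℕ}

theorem pow_mulVec_single_eq_single_iff_mulVec_single_eq_succ [Semiring R] (hn : 0 < n)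
    (C : Matrix (Fin n) (Fin n) R) :
    (∀ i : Fin n, (C ^ (i : ℕ)).mulVec (Pi.single (⟨0, hn⟩ : Fin n) 1) = Pi.single i 1) ↔
      ∀ (j : Fin n) (h : (j : ℕ) + 1 < n),
        C.mulVec (Pi.single j 1) = Pi.single (⟨(j : ℕ) + 1, h⟩ : Fin n) 1 := by
  constructor
  · intro hpow j hj
    rw [← hpow j, mulVec_mulVec, ← pow_succ']
    exact hpow ⟨(j : ℕ) + 1, hj⟩
  · rintro hstep ⟨i, hi⟩
    induction i with
    | zero => rw [pow_zero, one_mulVec]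
    | succ k ih =>
      have hk : k < n := Nat.lt_of_succ_lt hi
      rw [pow_succ', ← mulVec_mulVec, ih hk]
      exact hstep ⟨k, hk⟩ hi

variable {ι : Type*} [Fintype ι] [DecidableEq ι]

theorem eq_of_commute_of_mulVec_eq [Semiring R] {C M N : Matrix ι ι R} {v : ι → R}
    {d : ι → ℕ} (hv : ∀ i, (C ^ d i).mulVec v = Pi.single i 1)
    (hM : Commute M C) (hN : Commute N C) (hMN : M.mulVec v = N.mulVec v) : M = N := by
  refine ext_of_mulVec_single fun j => ?_
  rw [← hv j, mulVec_mulVec, mulVec_mulVec, (hM.pow_right _).eq, (hN.pow_right _).eq,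
    ← mulVec_mulVec, ← mulVec_mulVec, hMN]

theorem eq_sum_smul_pow_of_commute [CommSemiring R] {C M : Matrix ι ι R} {v : ι → R}
    {d : ι → ℕ} (hv : ∀ i, (C ^ d i).mulVec v = Pi.single i 1) (hM : Commute M C) :
    M = ∑ k, M.mulVec v k • C ^ d k := by
  refine eq_of_commute_of_mulVec_eq hv hM
    (Commute.sum_left _ _ _ fun k _ => ((Commute.refl C).pow_left _).smul_left _) ?_
  rw [sum_mulVec]
  simp_rw [smul_mulVec, hv]
  exact pi_eq_sum_univ' _

theorem mem_span_pow_of_commute [CommSemiring R] {C M : Matrix ι ι R} {v : ι → R}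
    {d : ι → ℕ} (hv : ∀ i, (C ^ d i).mulVec v = Pi.single i 1) (hM : Commute M C) :
    M ∈ Submodule.span R (Set.range fun i => C ^ d i) := by
  rw [eq_sum_smul_pow_of_commute hv hM]
  exact Submodule.sum_mem _ fun k _ => Submodule.smul_mem _ _ (Submodule.subset_span ⟨k, rfl⟩)

end Matrix

/-- Let `A` be a commutative ring, `n ≥ 1`, `S` a set with a
distinguished element `s₁`, `φ : A[Y_s : s ∈ S] → M_n(A)` an `A`-algebra homomorphism,
and `C = φ Y_{s₁}`.  Then `C^{i−1}·e₁ = e_i` for `i = 1, …, n` if and only if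
`C·e_j = e_{j+1}` for `j = 1, …, n−1` (companion form with arbitrary last column) and
every `φ Y_s` lies in the `A`-span of `Iₙ, C, …, C^{n−1}`. -/
theorem stmt13 {A : Type*} [CommRing A] (n : ℕ) (hn : 0 < n)
    {S : Type*} (s₁ : S)
    (φ : MvPolynomial S A →ₐ[A] Matrix (Fin n) (Fin n) A)
    (C : Matrix (Fin n) (Fin n) A) (hC : C = φ (MvPolynomial.X s₁)) :
    (∀ i : Fin n,
        (C ^ (i : ℕ)).mulVec (Pi.single (⟨0, hn⟩ : Fin n) 1) = Pi.single i 1)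
    ↔ ((∀ (j : Fin n) (h : (j : ℕ) + 1 < n),
          C.mulVec (Pi.single j 1) = Pi.single (⟨(j : ℕ) + 1, h⟩ : Fin n) 1)
        ∧ ∀ s : S,
          φ (MvPolynomial.X s) ∈
            Submodule.span A (Set.range fun i : Fin n => C ^ (i : ℕ))) := by
  rw [← Matrix.pow_mulVec_single_eq_single_iff_mulVec_single_eq_succ hn]
  refine ⟨fun hpow => ⟨hpow, fun s => ?_⟩, And.left⟩
  have hcomm : Commute (φ (MvPolynomial.X s)) C := hC ▸ (Commute.all _ _).map φ
  exact Matrix.mem_span_pow_of_commute hpow hcomm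
end

section
/- Let A be a commutative ring, m ≥ 1, and let d, n, s be integers with C(d+m−1, m) < n ≤ C(d+m, m) and s = C(d+m, m) − n, where C denotes the binomial coefficient. Enumerate the monomials m_1, m_2, … of the polynomial ring A[Y_1, …, Y_m] in order of increasing total degree and lexicographically within each degree, so that m_1, …, m_{C(d+m,m)} are exactly the monomials of degree at most d and m_{C(d+m−1,m)+1}, …, m_{C(d+m,m)} those of degree exactly d. For each family a = (a_{ij}) of elements of A indexed by i ∈ {n+1, …, C(d+m,m)} and j ∈ {C(d+m−1,m)+1, …, n}, let I_a be the ideal of A[Y_1, …, Y_m] generated by all monomials of degree strictly greater than d together with the polynomials m_i − Σ_{j=C(d+m−1,m)+1}^{n} a_{ij}·m_j for i = n+1, …, C(d+m,m). Then for each a the images of m_1, …, m_n form a basis of the A-module A[Y_1, …, Y_m]/I_a, and the assignment a ↦ I_a is injective. -/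
/-- The ideal `I_a` of `A[Y_1, …, Y_m]` generated by all monomials of degree `> d`
together with the polynomials `m_i − ∑_j a_{ij}·m_j` for `i = n+1, …, C(d+m, m)`,
where `j` runs over `C(d+m−1, m)+1, …, n` and `m_i` denotes the `i`-th monomial in the
enumeration `μ`. -/
noncomputable def degenIdeal {A : Type*} [CommRing A] (m : ℕ)
    (μ : ℕ → (Fin m →₀ ℕ)) (d n : ℕ) (a : ℕ → ℕ → A) :
    Ideal (MvPolynomial (Fin m) A) :=
  Ideal.span
    ({q | ∃ f : Fin m →₀ ℕ, d < f.sum (fun _ e => e) ∧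
        q = MvPolynomial.monomial f (1 : A)} ∪
     {q | ∃ i ∈ Finset.Ioc n ((d + m).choose m),
        q = MvPolynomial.monomial (μ i) (1 : A) -
          ∑ j ∈ Finset.Ioc ((d + m - 1).choose m) n,
            MvPolynomial.C (a i j) * MvPolynomial.monomial (μ j) (1 : A)})

/-!
Let `N = C(d+m, m)` and `c = C(d+m-1, m)`. Reading off the coefficients of `m_1, …, m_N` and
replacing each `m_i` with `i > n` by `∑_j a_ij m_j` defines an `A`-linear map `φ : A[Y] → Aⁿ`
with `φ(m_t) = e_t` for `t ≤ n`. Every generator of `I_a` is homogeneous of degree `≥ d` and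
killed by `φ`, and its multiples by nonconstant monomials live in degrees `> d`, where `φ`
vanishes; so `φ` kills `I_a`. Conversely `p - ∑_t φ(p)_t m_t ∈ I_a` for every `p`, so
`v ↦ ∑_t v_t m_t` is an isomorphism `Aⁿ ≅ A[Y]/I_a`. Finally `φ` applied to the generator
`m_i - ∑_j a'_ij m_j` of `I_{a'} = I_a` is the row `a_i - a'_i`, which must therefore vanish.
-/

theorem Finsupp.degree_cons {n : ℕ} (y : ℕ) (s : Fin n →₀ ℕ) :
    (cons y s).degree = y + s.degree := by
  simp [degree_eq_sum, Fin.sum_univ_succ, cons_zero, cons_succ]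

theorem Finsupp.natCard_degree_le (m e : ℕ) :
    Nat.card {f : Fin m →₀ ℕ // f.degree ≤ e} = (e + m).choose m := by
  let E : {f : Fin m →₀ ℕ // f.degree ≤ e} ≃
      {g : Fin (m + 1) →₀ ℕ // g.sum (fun _ ↦ id) = e} :=
    { toFun f := ⟨cons (e - f.1.degree) f.1, by
        change degree _ = e
        rw [degree_cons]; have := f.2; omega⟩
      invFun g := ⟨tail g.1, by
        have h : degree g.1 = e := g.2
        rw [← cons_tail g.1, degree_cons] at h; omega⟩
      left_inv f := by simp [tail_cons]
      right_inv g := by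
        have h : degree g.1 = e := g.2
        rw [← cons_tail g.1, degree_cons] at h
        ext1
        simp only
        rw [show e - (tail g.1).degree = g.1 0 by omega, cons_tail] }
  rw [Nat.card_congr (E.trans (Sym.equivNatSum _ e).symm), Nat.card_eq_fintype_card,
    Sym.card_sym_eq_choose, Fintype.card_fin, Nat.add_right_comm, Nat.add_sub_cancel,
    add_comm e m, Nat.choose_symm_add]

open Set in
theorem Function.Bijective.apply_le_iff_lt_ncard {α : Type*} {ν : ℕ → α} (hν : ν.Bijective)
    {g : α → ℕ} (hg : Monotone (g ∘ ν)) {e : ℕ} (hfin : {x | g x ≤ e}.Finite) (k : ℕ) :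
    g (ν k) ≤ e ↔ k < {x | g x ≤ e}.ncard := by
  set S := ν ⁻¹' {x | g x ≤ e}
  have hS : IsLowerSet S := fun k l hlk hk => (hg hlk).trans hk
  have hcard : S.ncard = {x | g x ≤ e}.ncard := by
    rw [← ncard_image_of_injective S hν.injective, image_preimage_eq _ hν.surjective]
  have hSfin : S.Finite := hfin.preimage hν.injective.injOn
  obtain hSuniv | ⟨a, hSa⟩ := hS.eq_univ_or_Iio
  · exact absurd (hSuniv ▸ hSfin) infinite_univ
  · rw [← hcard, hSa, ncard_Iio_nat, ← mem_Iio, ← hSa]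
    rfl

theorem Fin.sum_ite_lt_succ_eq_sum_Ioc {M : Type*} [AddCommMonoid M] (c n : ℕ) (F : ℕ → M) :
    ∑ t : Fin n, (if c < (t : ℕ) + 1 then F (t + 1) else 0) = ∑ j ∈ Finset.Ioc c n, F j := by
  have hIoc : Finset.Ioc c n = (Finset.range (n + 1)).filter (c < ·) := by
    ext j; simp only [Finset.mem_Ioc, Finset.mem_filter, Finset.mem_range]; omega
  rw [Fin.sum_univ_eq_sum_range (fun t => if c < t + 1 then F (t + 1) else 0), hIoc,
    Finset.sum_filter, Finset.sum_range_succ' _ n, if_neg (Nat.not_lt_zero c), add_zero]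

namespace MvPolynomial

variable {σ A M : Type*} [CommRing A] [AddCommGroup M] [Module A M]
  {φ : MvPolynomial σ A →ₗ[A] M} {d : ℕ}

theorem map_mul_eq_zero_of_isHomogeneous
    (hφ : ∀ p e, p.IsHomogeneous e → d < e → φ p = 0) {g : MvPolynomial σ A} {e : ℕ}
    (hde : d ≤ e) (hg : g.IsHomogeneous e) (hφg : φ g = 0) (q : MvPolynomial σ A) :
    φ (q * g) = 0 := by
  induction q using MvPolynomial.induction_on' with
  | monomial u r =>
    obtain rfl | hu := eq_or_ne u 0
    · rw [monomial_zero', C_mul', map_smul, hφg, smul_zero]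
    · refine hφ _ _ ((isHomogeneous_monomial r rfl).mul hg) ?_
      have := (Finsupp.degree_eq_zero_iff u).not.mpr hu
      omega
  | add p q hp hq => rw [add_mul, map_add, hp, hq, add_zero]

theorem map_eq_zero_of_mem_ideal_span
    (hφ : ∀ p e, p.IsHomogeneous e → d < e → φ p = 0) {S : Set (MvPolynomial σ A)}
    (hS : ∀ g ∈ S, φ g = 0 ∧ ∃ e, d ≤ e ∧ g.IsHomogeneous e) {p : MvPolynomial σ A}
    (hp : p ∈ Ideal.span S) : φ p = 0 := by
  suffices ∀ q, φ (q * p) = 0 by simpa using this 1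
  induction hp using Submodule.span_induction with
  | mem g hg =>
    obtain ⟨hφg, e, hde, hg⟩ := hS g hg
    exact map_mul_eq_zero_of_isHomogeneous hφ hde hg hφg
  | zero => simp
  | add x y _ _ hx hy => intro q; rw [mul_add, map_add, hx, hy, add_zero]
  | smul r x _ hx => intro q; rw [smul_eq_mul, ← mul_assoc]; exact hx _

end MvPolynomial

section MonomialEnumeration

variable {σ : Type*}

structure IsDegreeEnumeration (μ : ℕ → (σ →₀ ℕ)) (d c N : ℕ) : Prop where
  bijOn : Set.BijOn μ (Set.Icc 1 N) {f | f.degree ≤ d}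
  degree_eq : ∀ i ∈ Set.Ioc c N, (μ i).degree = d

variable {m : ℕ} {μ : ℕ → (Fin m →₀ ℕ)}

theorem degree_le_iff_le_choose (hbij : Set.BijOn μ {i | 1 ≤ i} Set.univ)
    (hmono : Monotone fun k => (μ (k + 1)).degree) (e i : ℕ) (hi : 1 ≤ i) :
    (μ i).degree ≤ e ↔ i ≤ (e + m).choose m := by
  have hν : Function.Bijective fun k => μ (k + 1) :=
    ⟨fun k l h => by simpa using hbij.injOn (by simp) (by simp) h, fun f => by
      obtain ⟨i, hi, rfl⟩ := hbij.surjOn (Set.mem_univ f)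
      exact ⟨i - 1, by simp [Nat.sub_add_cancel (show 1 ≤ i from hi)]⟩⟩
  have := hν.apply_le_iff_lt_ncard hmono (Finsupp.finite_of_degree_le e) (i - 1)
  rw [← Nat.card_coe_set_eq, Set.coe_ofPred, Finsupp.natCard_degree_le,
    Nat.sub_add_cancel hi] at this
  rw [this]
  omega

theorem isDegreeEnumeration_choose (hbij : Set.BijOn μ {i | 1 ≤ i} Set.univ)
    (hmono : Monotone fun k => (μ (k + 1)).degree) (d : ℕ) :
    IsDegreeEnumeration μ d ((d + m - 1).choose m) ((d + m).choose m) := by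
  have hdeg := degree_le_iff_le_choose hbij hmono
  refine ⟨⟨fun i hi => (hdeg d i hi.1).mpr hi.2, hbij.injOn.mono fun _ hi => hi.1, fun f hf => ?_⟩,
    fun i ⟨hci, hiN⟩ => ?_⟩
  · obtain ⟨i, hi, rfl⟩ := hbij.surjOn (Set.mem_univ f)
    exact ⟨i, ⟨hi, (hdeg d i hi).mp hf⟩, rfl⟩
  · have hle := (hdeg d i (by omega)).mpr hiN
    obtain rfl | hd := Nat.eq_zero_or_pos d
    · omega
    · -- `C(d+m-1, m)` counts the monomials of degree `≤ d - 1`.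
      have : ¬ (μ i).degree ≤ d - 1 := by
        rw [hdeg (d - 1) i (by omega), show d - 1 + m = d + m - 1 by omega]
        exact not_le.mpr hci
      omega

end MonomialEnumeration

namespace DegenIdeal

open MvPolynomial

noncomputable def ideal {σ A : Type*} [CommRing A] (μ : ℕ → (σ →₀ ℕ)) (d c n N : ℕ)
    (a : ℕ → ℕ → A) : Ideal (MvPolynomial σ A) :=
  Ideal.span ({q | ∃ f : σ →₀ ℕ, d < f.degree ∧ q = monomial f 1} ∪
    {q | ∃ i ∈ Finset.Ioc n N,
      q = monomial (μ i) 1 - ∑ j ∈ Finset.Ioc c n, C (a i j) * monomial (μ j) 1})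

theorem degenIdeal_eq_ideal {A : Type*} [CommRing A] (m : ℕ) (μ : ℕ → (Fin m →₀ ℕ))
    (d n : ℕ) (a : ℕ → ℕ → A) :
    degenIdeal m μ d n a = ideal μ d ((d + m - 1).choose m) n ((d + m).choose m) a :=
  rfl

section

variable {σ A : Type*} [CommRing A]

def restrictRow (c n : ℕ) (b : ℕ → A) : Fin n → A :=
  fun t => if c < (t : ℕ) + 1 then b (t + 1) else 0

-- The image in `Aⁿ` of the monomial `m_i` under the isomorphism `A[Y]/I_a ≅ Aⁿ`.
def monomialCoords (c n : ℕ) (a : ℕ → ℕ → A) (i : ℕ) : Fin n → A :=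
  if i ≤ n then fun t => if (t : ℕ) + 1 = i then 1 else 0 else restrictRow c n (a i)

noncomputable def normalForm (μ : ℕ → (σ →₀ ℕ)) (c n N : ℕ) (a : ℕ → ℕ → A) :
    MvPolynomial σ A →ₗ[A] (Fin n → A) :=
  ∑ i ∈ Finset.Icc 1 N, (lcoeff A (μ i)).smulRight (monomialCoords c n a i)

-- Coordinate `t : Fin n` corresponds to the monomial `m_{t+1}`: the enumeration `μ` is 1-indexed.
noncomputable def combination (μ : ℕ → (σ →₀ ℕ)) (n : ℕ) :
    (Fin n → A) →ₗ[A] MvPolynomial σ A :=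
  Fintype.linearCombination A fun t : Fin n => monomial (μ (t + 1)) 1

variable {μ : ℕ → (σ →₀ ℕ)} {c n N : ℕ} {a : ℕ → ℕ → A}

theorem monomialCoords_of_le {i : ℕ} (hi : 1 ≤ i) (hin : i ≤ n) :
    monomialCoords c n a i = Pi.single ⟨i - 1, by omega⟩ 1 := by
  ext t
  simp only [monomialCoords, if_pos hin, Pi.single_apply, Fin.ext_iff]
  exact if_congr (by omega) rfl rfl

theorem monomialCoords_of_lt {i : ℕ} (hi : n < i) :
    monomialCoords c n a i = restrictRow c n (a i) :=
  if_neg hi.not_ge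

theorem normalForm_apply (p : MvPolynomial σ A) :
    normalForm μ c n N a p = ∑ i ∈ Finset.Icc 1 N, coeff (μ i) p • monomialCoords c n a i := by
  simp [normalForm, LinearMap.sum_apply]

theorem normalForm_monomial (hinj : Set.InjOn μ (Set.Icc 1 N)) {i : ℕ} (hi : i ∈ Set.Icc 1 N) :
    normalForm μ c n N a (monomial (μ i) 1) = monomialCoords c n a i := by
  classical
  rw [normalForm_apply, Finset.sum_eq_single_of_mem i (by simpa using hi)]
  · rw [coeff_monomial, if_pos rfl, one_smul]
  · intro j hj hji
    rw [coeff_monomial, if_neg, zero_smul]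
    exact fun h => hji (hinj hi (by simpa using hj) h).symm

theorem normalForm_eq_zero_of_isHomogeneous {d : ℕ}
    (hμ : Set.MapsTo μ (Set.Icc 1 N) {f | f.degree ≤ d}) {p : MvPolynomial σ A} {e : ℕ}
    (hp : p.IsHomogeneous e) (hde : d < e) : normalForm μ c n N a p = 0 := by
  rw [normalForm_apply]
  refine Finset.sum_eq_zero fun i hi => ?_
  have : (μ i).degree ≤ d := hμ (by simpa using hi)
  rw [hp.coeff_eq_zero (by omega), zero_smul]

theorem combination_single (t : Fin n) :
    combination μ n (Pi.single t 1) = (monomial (μ (t + 1)) 1 : MvPolynomial σ A) := by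
  rw [combination, Fintype.linearCombination_apply_single, one_smul]

theorem normalForm_combination (hinj : Set.InjOn μ (Set.Icc 1 N)) (hnN : n ≤ N)
    (v : Fin n → A) : normalForm μ c n N a (combination μ n v) = v := by
  rw [combination, Fintype.linearCombination_apply, map_sum]
  conv_rhs => rw [← Finset.univ_sum_single v]
  refine Finset.sum_congr rfl fun t _ => ?_
  have ht := t.isLt
  rw [map_smul, normalForm_monomial hinj ⟨by omega, by omega⟩,
    monomialCoords_of_le (by omega) (by omega)]
  ext s
  simp [Pi.single_apply, Fin.ext_iff]

theorem combination_restrictRow (b : ℕ → A) :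
    combination μ n (restrictRow c n b)
      = ∑ j ∈ Finset.Ioc c n, C (b j) * (monomial (μ j) 1 : MvPolynomial σ A) := by
  simp only [combination, Fintype.linearCombination_apply, restrictRow, ite_smul, zero_smul]
  rw [Fin.sum_ite_lt_succ_eq_sum_Ioc c n fun j => b j • monomial (μ j) (1 : A)]
  simp only [C_mul']

theorem normalForm_sub_combination (hinj : Set.InjOn μ (Set.Icc 1 N)) (hnN : n ≤ N) {i : ℕ}
    (hin : n < i) (hiN : i ≤ N) (b : ℕ → A) :
    normalForm μ c n N a (monomial (μ i) 1 - combination μ n (restrictRow c n b))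
      = restrictRow c n (a i) - restrictRow c n b := by
  rw [map_sub, normalForm_monomial hinj ⟨by omega, hiN⟩, monomialCoords_of_lt hin,
    normalForm_combination hinj hnN]

variable {d : ℕ}

theorem monomial_mem_ideal {f : σ →₀ ℕ} (hf : d < f.degree) :
    monomial f 1 ∈ ideal μ d c n N a :=
  Ideal.subset_span (Or.inl ⟨f, hf, rfl⟩)

theorem sub_combination_mem_ideal (a : ℕ → ℕ → A) {i : ℕ} (hi : i ∈ Finset.Ioc n N) :
    monomial (μ i) 1 - combination μ n (restrictRow c n (a i)) ∈ ideal μ d c n N a := by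
  rw [combination_restrictRow]
  exact Ideal.subset_span (Or.inr ⟨i, hi, rfl⟩)

theorem normalForm_eq_zero_of_mem (hμ : IsDegreeEnumeration μ d c N) (hcn : c < n)
    (hnN : n ≤ N) {p : MvPolynomial σ A} (hp : p ∈ ideal μ d c n N a) :
    normalForm μ c n N a p = 0 := by
  have hφ : ∀ (q : MvPolynomial σ A) e, q.IsHomogeneous e → d < e →
      normalForm μ c n N a q = 0 :=
    fun _ _ hq hde => normalForm_eq_zero_of_isHomogeneous hμ.bijOn.mapsTo hq hde
  refine map_eq_zero_of_mem_ideal_span hφ ?_ hp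
  rintro g (⟨f, hf, rfl⟩ | ⟨i, hi, rfl⟩)
  · have hg := isHomogeneous_monomial (1 : A) (rfl : f.degree = _)
    exact ⟨hφ _ _ hg hf, _, hf.le, hg⟩
  · rw [Finset.mem_Ioc] at hi
    have hg : IsHomogeneous
        (monomial (μ i) 1 - ∑ j ∈ Finset.Ioc c n, C (a i j) * monomial (μ j) 1) d :=
      (isHomogeneous_monomial 1 (hμ.degree_eq i ⟨by omega, hi.2⟩)).sub <|
        IsHomogeneous.sum _ _ _ fun j hj => (isHomogeneous_monomial 1 <| hμ.degree_eq j <| by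
          simp only [Finset.mem_Ioc] at hj; exact ⟨hj.1, by omega⟩).C_mul _
    refine ⟨?_, d, le_rfl, hg⟩
    rw [← combination_restrictRow, normalForm_sub_combination hμ.bijOn.injOn hnN hi.1 hi.2,
      sub_self]

theorem sub_combination_normalForm_mem (hμ : Set.BijOn μ (Set.Icc 1 N) {f | f.degree ≤ d})
    (p : MvPolynomial σ A) :
    p - combination μ n (normalForm μ c n N a p) ∈ ideal μ d c n N a := by
  induction p using MvPolynomial.induction_on' with
  | monomial u r =>
    rw [← mul_one r, ← smul_eq_mul, ← smul_monomial, map_smul, map_smul, ← smul_sub]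
    refine Submodule.smul_of_tower_mem _ r ?_
    by_cases hu : d < u.degree
    · rw [normalForm_eq_zero_of_isHomogeneous hμ.mapsTo (isHomogeneous_monomial 1 rfl) hu,
        map_zero, sub_zero]
      exact monomial_mem_ideal hu
    · obtain ⟨i, hi, rfl⟩ := hμ.surjOn (not_lt.mp hu)
      rw [normalForm_monomial hμ.injOn hi]
      rcases le_or_gt i n with hin | hin
      · rw [monomialCoords_of_le hi.1 hin, combination_single, Fin.val_mk,
          Nat.sub_add_cancel hi.1, sub_self]
        exact zero_mem _
      · rw [monomialCoords_of_lt hin]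
        exact sub_combination_mem_ideal a (Finset.mem_Ioc.mpr ⟨hin, hi.2⟩)
  | add p q hp hq =>
    rw [map_add, map_add, add_sub_add_comm]
    exact add_mem hp hq

theorem bijective_mk_comp_combination (hμ : IsDegreeEnumeration μ d c N) (hcn : c < n)
    (hnN : n ≤ N) :
    Function.Bijective
      ((Ideal.Quotient.mkₐ A (ideal μ d c n N a)).toLinearMap ∘ₗ combination μ n) := by
  refine ⟨(injective_iff_map_eq_zero _).mpr fun v hv => ?_, fun x => ?_⟩
  · have hmem : combination μ n v ∈ ideal μ d c n N a := Ideal.Quotient.eq_zero_iff_mem.mp hv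
    rw [← normalForm_combination (c := c) (a := a) hμ.bijOn.injOn hnN v]
    exact normalForm_eq_zero_of_mem hμ hcn hnN hmem
  · obtain ⟨p, rfl⟩ := Ideal.Quotient.mk_surjective x
    exact ⟨_, (Ideal.Quotient.eq.mpr (sub_combination_normalForm_mem hμ.bijOn p)).symm⟩

theorem exists_basis_mk_monomial (hμ : IsDegreeEnumeration μ d c N) (hcn : c < n)
    (hnN : n ≤ N) :
    ∃ b : Module.Basis (Fin n) A (MvPolynomial σ A ⧸ ideal μ d c n N a),
      ⇑b = fun t : Fin n => Ideal.Quotient.mk _ (monomial (μ ((t : ℕ) + 1)) (1 : A)) := by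
  refine ⟨(Pi.basisFun A (Fin n)).map (LinearEquiv.ofBijective _
    (bijective_mk_comp_combination hμ hcn hnN)), funext fun t => ?_⟩
  simp [combination_single]

theorem eq_of_ideal_eq (hμ : IsDegreeEnumeration μ d c N) (hcn : c < n) (hnN : n ≤ N)
    {a' : ℕ → ℕ → A} (h : ideal μ d c n N a = ideal μ d c n N a') {i j : ℕ}
    (hi : i ∈ Finset.Ioc n N) (hj : j ∈ Finset.Ioc c n) : a i j = a' i j := by
  have hmem := sub_combination_mem_ideal (μ := μ) (d := d) (c := c) a' hi
  rw [← h] at hmem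
  have h0 := normalForm_eq_zero_of_mem hμ hcn hnN hmem
  rw [Finset.mem_Ioc] at hi hj
  rw [normalForm_sub_combination hμ.bijOn.injOn hnN hi.1 hi.2, sub_eq_zero] at h0
  have := congrFun h0 ⟨j - 1, by omega⟩
  simpa only [restrictRow, Nat.sub_add_cancel (by omega : 1 ≤ j), if_pos hj.1] using this

end

end DegenIdeal

theorem stmt19_general {A : Type*} [CommRing A] (m : ℕ)
    (μ : ℕ → (Fin m →₀ ℕ))
    (hbij : Set.BijOn μ {i : ℕ | 1 ≤ i} Set.univ)
    (hord : ∀ k l : ℕ, 1 ≤ k → k < l →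
      (μ k).sum (fun _ e => e) < (μ l).sum (fun _ e => e) ∨
        ((μ k).sum (fun _ e => e) = (μ l).sum (fun _ e => e) ∧
          toLex (μ k) < toLex (μ l)))
    (d n : ℕ) (h1 : (d + m - 1).choose m < n) (h2 : n ≤ (d + m).choose m) :
    (∀ a : ℕ → ℕ → A,
      LinearIndependent A (fun i : Fin n =>
        Ideal.Quotient.mk (degenIdeal m μ d n a)
          (MvPolynomial.monomial (μ ((i : ℕ) + 1)) (1 : A))) ∧
      Submodule.span A (Set.range fun i : Fin n =>
        Ideal.Quotient.mk (degenIdeal m μ d n a)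
          (MvPolynomial.monomial (μ ((i : ℕ) + 1)) (1 : A))) = ⊤)
    ∧ ∀ a a' : ℕ → ℕ → A, degenIdeal m μ d n a = degenIdeal m μ d n a' →
        ∀ i ∈ Finset.Ioc n ((d + m).choose m),
          ∀ j ∈ Finset.Ioc ((d + m - 1).choose m) n, a i j = a' i j := by
  have hmono : Monotone fun k => (μ (k + 1)).degree := monotone_nat_of_le_succ fun k => by
    rcases hord (k + 1) (k + 2) (by omega) (by omega) with h | h
    exacts [h.le, h.1.le]
  have hμ := isDegreeEnumeration_choose hbij hmono d
  refine ⟨fun a => ?_, fun a a' h i hi j hj => ?_⟩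
  · obtain ⟨b, hb⟩ := DegenIdeal.exists_basis_mk_monomial (a := a) hμ h1 h2
    rw [DegenIdeal.degenIdeal_eq_ideal]
    exact hb ▸ ⟨b.linearIndependent, b.span_eq⟩
  · rw [DegenIdeal.degenIdeal_eq_ideal, DegenIdeal.degenIdeal_eq_ideal] at h
    exact DegenIdeal.eq_of_ideal_eq hμ h1 h2 h hi hj

/-- Let `A` be a commutative ring, `m ≥ 1`, and `d, n, s` with
`C(d+m−1, m) < n ≤ C(d+m, m)` and `s = C(d+m, m) − n`.  Enumerate the monomials of
`A[Y_1, …, Y_m]` as `m_1, m_2, …` by increasing total degree and lexicographically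
within each degree (the enumeration `μ`, `1`-indexed).  Then for every family
`a = (a_{ij})` (`i ∈ {n+1, …, C(d+m,m)}`, `j ∈ {C(d+m−1,m)+1, …, n}`) the images of
`m_1, …, m_n` form a basis of the `A`-module `A[Y_1, …, Y_m]/I_a`, and the assignment
`a ↦ I_a` is injective. -/
theorem stmt19 {A : Type*} [CommRing A] (m : ℕ) (hm : 1 ≤ m)
    (μ : ℕ → (Fin m →₀ ℕ))
    (hbij : Set.BijOn μ {i : ℕ | 1 ≤ i} Set.univ)
    (hord : ∀ k l : ℕ, 1 ≤ k → k < l →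
      (μ k).sum (fun _ e => e) < (μ l).sum (fun _ e => e) ∨
        ((μ k).sum (fun _ e => e) = (μ l).sum (fun _ e => e) ∧
          toLex (μ k) < toLex (μ l)))
    (d n s : ℕ) (h1 : (d + m - 1).choose m < n) (h2 : n ≤ (d + m).choose m)
    (hs : s = (d + m).choose m - n) :
    (∀ a : ℕ → ℕ → A,
      LinearIndependent A (fun i : Fin n =>
        Ideal.Quotient.mk (degenIdeal m μ d n a)
          (MvPolynomial.monomial (μ ((i : ℕ) + 1)) (1 : A))) ∧
      Submodule.span A (Set.range fun i : Fin n =>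
        Ideal.Quotient.mk (degenIdeal m μ d n a)
          (MvPolynomial.monomial (μ ((i : ℕ) + 1)) (1 : A))) = ⊤)
    ∧ ∀ a a' : ℕ → ℕ → A, degenIdeal m μ d n a = degenIdeal m μ d n a' →
        ∀ i ∈ Finset.Ioc n ((d + m).choose m),
          ∀ j ∈ Finset.Ioc ((d + m - 1).choose m) n, a i j = a' i j :=
  stmt19_general m μ hbij hord d n h1 h2
end
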